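/- arXiv:1506.06692 — 7 statements merged into one kernel-verified Lean document; each statement's English description precedes it below -/
import Mathlib

section
/- Let K be a real (p+q)×(p+q) matrix in block form K = [[A,B],[C,D]] with C = Bᵀ, and let λ ∈ ℝ be such that D − λ·I is invertible. Then the linear map φ ↦ (φ, −(D−λ·I)⁻¹Cφ) is a linear bijection from the λ-eigenspace ker(F_λ − λ·I) of the Schur complement F_λ := A − B(D−λ·I)⁻¹C onto the λ-eigenspace ker(K − λ·I) of K; in particular the multiplicities of λ as an eigenvalue of K and of F_λ agree. -/
open Matrix

set_option maxHeartbeats 1000000 in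
/-- For `K = [[A,B],[C,D]]` with `C = Bᵀ` and `D - λ·I` invertible, the map
`φ ↦ (φ, -(D-λ·I)⁻¹Cφ)` is a linear bijection from the `λ`-eigenspace of the Schur
complement `F_λ = A - B(D-λ·I)⁻¹C` onto the `λ`-eigenspace of `K`; in particular the
multiplicities of `λ` as eigenvalue of `K` and of `F_λ` agree. -/
theorem schur_eigenspace_equiv {p q : ℕ}
    (A : Matrix (Fin p) (Fin p) ℝ) (B : Matrix (Fin p) (Fin q) ℝ)
    (C : Matrix (Fin q) (Fin p) ℝ) (D : Matrix (Fin q) (Fin q) ℝ)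
    (hC : C = Bᵀ) (lam : ℝ)
    (hD : IsUnit (D - lam • (1 : Matrix (Fin q) (Fin q) ℝ))) :
    ∃ e : LinearMap.ker (Matrix.mulVecLin
            ((A - B * (D - lam • 1)⁻¹ * C) - lam • 1)) ≃ₗ[ℝ]
          LinearMap.ker (Matrix.mulVecLin (Matrix.fromBlocks A B C D - lam • 1)),
      (∀ φ, (e φ : Fin p ⊕ Fin q → ℝ) =
          Sum.elim (φ : Fin p → ℝ) (-(((D - lam • 1)⁻¹ * C).mulVec (φ : Fin p → ℝ)))) ∧
      Module.finrank ℝ (LinearMap.ker (Matrix.mulVecLin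
            ((A - B * (D - lam • 1)⁻¹ * C) - lam • 1))) =
        Module.finrank ℝ (LinearMap.ker (Matrix.mulVecLin
            (Matrix.fromBlocks A B C D - lam • 1))) := by
  have hdet : IsUnit (D - lam • (1 : Matrix (Fin q) (Fin q) ℝ)).det :=
    (Matrix.isUnit_iff_isUnit_det _).mp hD
  set Dl : Matrix (Fin q) (Fin q) ℝ := D - lam • 1 with hDldef
  have hmul : Dl * Dl⁻¹ = 1 := Matrix.mul_nonsing_inv Dl hdet
  have hmul' : Dl⁻¹ * Dl = 1 := Matrix.nonsing_inv_mul Dl hdet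
  have hblock : Matrix.fromBlocks A B C D - lam • 1
      = Matrix.fromBlocks (A - lam • 1) B C Dl := by
    rw [← Matrix.fromBlocks_one, Matrix.fromBlocks_smul]
    ext (i | i) (j | j) <;>
      simp [Matrix.fromBlocks, hDldef, Matrix.sub_apply, Matrix.smul_apply]
  have key : ∀ φ : Fin p → ℝ, ∀ ψ : Fin q → ℝ,
      (Matrix.fromBlocks A B C D - lam • 1).mulVec (Sum.elim φ ψ)
        = Sum.elim ((A - lam • 1).mulVec φ + B.mulVec ψ)
            (C.mulVec φ + Dl.mulVec ψ) := by
    intro φ ψ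
    rw [hblock, Matrix.fromBlocks_mulVec]
    simp [Sum.elim_comp_inl, Sum.elim_comp_inr]
  have fwd : ∀ φ : Fin p → ℝ,
      ((A - B * Dl⁻¹ * C) - lam • 1).mulVec φ = 0 →
      (Matrix.fromBlocks A B C D - lam • 1).mulVec
        (Sum.elim φ (-((Dl⁻¹ * C).mulVec φ))) = 0 := by
    intro φ hφ
    rw [key]
    have h1 : (A - lam • 1).mulVec φ + B.mulVec (-((Dl⁻¹ * C).mulVec φ)) = 0 := by
      rw [Matrix.mulVec_neg, Matrix.mulVec_mulVec, ← Matrix.mul_assoc,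
        Matrix.sub_mulVec]
      rw [Matrix.sub_mulVec, Matrix.sub_mulVec] at hφ
      linear_combination hφ
    have h2 : C.mulVec φ + Dl.mulVec (-((Dl⁻¹ * C).mulVec φ)) = 0 := by
      rw [Matrix.mulVec_neg, Matrix.mulVec_mulVec, ← Matrix.mul_assoc, hmul,
        Matrix.one_mul]
      simp
    rw [h1, h2]
    ext (i | i) <;> simp
  have bwd : ∀ x : Fin p ⊕ Fin q → ℝ,
      (Matrix.fromBlocks A B C D - lam • 1).mulVec x = 0 →
      (x ∘ Sum.inr = -((Dl⁻¹ * C).mulVec (x ∘ Sum.inl))) ∧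
      ((A - B * Dl⁻¹ * C) - lam • 1).mulVec (x ∘ Sum.inl) = 0 := by
    intro x hx
    have hx' : (Matrix.fromBlocks A B C D - lam • 1).mulVec
        (Sum.elim (x ∘ Sum.inl) (x ∘ Sum.inr)) = 0 := by
      convert hx using 2
      ext (i | i) <;> rfl
    rw [key] at hx'
    have h1 : (A - lam • 1).mulVec (x ∘ Sum.inl) + B.mulVec (x ∘ Sum.inr) = 0 := by
      ext i; exact congrFun hx' (Sum.inl i)
    have h2 : C.mulVec (x ∘ Sum.inl) + Dl.mulVec (x ∘ Sum.inr) = 0 := by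
      ext i; exact congrFun hx' (Sum.inr i)
    have hψ : x ∘ Sum.inr = -((Dl⁻¹ * C).mulVec (x ∘ Sum.inl)) := by
      have h3 := congrArg (fun v => Dl⁻¹.mulVec v) h2
      simp only [Matrix.mulVec_add, Matrix.mulVec_mulVec, Matrix.mulVec_zero] at h3
      rw [hmul', Matrix.one_mulVec, add_comm] at h3
      exact eq_neg_of_add_eq_zero_left h3
    refine ⟨hψ, ?_⟩
    rw [hψ, Matrix.mulVec_neg, Matrix.mulVec_mulVec, ← Matrix.mul_assoc] at h1
    rw [Matrix.sub_mulVec, Matrix.sub_mulVec]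
    rw [Matrix.sub_mulVec] at h1
    linear_combination h1
  have memS : ∀ φ : LinearMap.ker (Matrix.mulVecLin ((A - B * Dl⁻¹ * C) - lam • 1)),
      ((A - B * Dl⁻¹ * C) - lam • 1).mulVec (φ : Fin p → ℝ) = 0 := by
    intro φ
    have := LinearMap.mem_ker.mp φ.2
    rwa [Matrix.mulVecLin_apply] at this
  have memK : ∀ x : LinearMap.ker (Matrix.mulVecLin (Matrix.fromBlocks A B C D - lam • 1)),
      (Matrix.fromBlocks A B C D - lam • 1).mulVec (x : Fin p ⊕ Fin q → ℝ) = 0 := by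
    intro x
    have := LinearMap.mem_ker.mp x.2
    rwa [Matrix.mulVecLin_apply] at this
  let e : LinearMap.ker (Matrix.mulVecLin ((A - B * Dl⁻¹ * C) - lam • 1)) ≃ₗ[ℝ]
      LinearMap.ker (Matrix.mulVecLin (Matrix.fromBlocks A B C D - lam • 1)) := {
    toFun := fun φ => ⟨Sum.elim (φ : Fin p → ℝ)
        (-((Dl⁻¹ * C).mulVec (φ : Fin p → ℝ))), by
      rw [LinearMap.mem_ker, Matrix.mulVecLin_apply]
      exact fwd _ (memS φ)⟩
    invFun := fun x => ⟨(x : Fin p ⊕ Fin q → ℝ) ∘ Sum.inl, by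
      rw [LinearMap.mem_ker, Matrix.mulVecLin_apply]
      exact (bwd _ (memK x)).2⟩
    map_add' := fun φ ψ => by
      ext (i | i) <;> simp [Matrix.mulVec_add] <;> ring
    map_smul' := fun c φ => by
      ext (i | i) <;> simp [Matrix.mulVec_smul] <;> ring
    left_inv := fun φ => by
      ext i; rfl
    right_inv := fun x => by
      have hψ := (bwd (x : Fin p ⊕ Fin q → ℝ) (memK x)).1
      ext (i | i)
      · rfl
      · exact (congrFun hψ i).symm }
  exact ⟨e, fun φ => rfl, e.finrank_eq⟩
end

section
/- Let K = [[A,B],[C,D]] be a real (p+q)×(p+q) block matrix, let E ∈ ℝ and ε, γ > 0, and assume D − E·I is invertible with ‖(D−E·I)⁻¹‖ ≤ 1/ε, ‖B‖ ≤ γ, and ‖C‖ ≤ γ (operator norms). Then for every λ ∈ ℝ with |λ − E| ≤ ε/2, the matrix D − λ·I is invertible with ‖(D−λ·I)⁻¹‖ ≤ 2/ε, and the Schur complements F_μ := A − B(D−μ·I)⁻¹C satisfy ‖F_E − F_λ‖ ≤ (2γ²/ε²)·|λ − E|. -/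
/-!
Write `R_μ = (D - μ)⁻¹`. Factoring `D - λ = (1 - (λ - E) R_E)(D - E)` and using
`‖(λ - E) R_E‖ ≤ 1/2` shows that `D - λ` is invertible (Neumann series). The resolvent identity
`R_E - R_λ = (E - λ) R_E R_λ` then gives both `‖R_λ‖ ≤ ‖R_E‖ + ‖R_λ‖ / 2`, i.e. `‖R_λ‖ ≤ 2/ε`,
and `F_E - F_λ = (λ - E) B R_E R_λ C`, whose norm is at most `|λ - E| γ (1/ε) (2/ε) γ`.
-/

open Matrix

/-- The operator norm of a real matrix acting between Euclidean spaces. -/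
noncomputable def opNorm {m n : Type*} [Fintype m] [Fintype n] [DecidableEq n]
    (M : Matrix m n ℝ) : ℝ :=
  ‖LinearMap.toContinuousLinearMap (Matrix.toEuclideanLin M)‖

open scoped Ring

section ShiftedInverse

variable {𝕜 A : Type*}

theorem Ring.inverse_sub_smul_one_sub_inverse [CommRing 𝕜] [Ring A] [Algebra 𝕜 A]
    {a : A} {e μ : 𝕜} (he : IsUnit (a - e • 1)) (hμ : IsUnit (a - μ • 1)) :
    (a - e • 1)⁻¹ʳ - (a - μ • 1)⁻¹ʳ = (e - μ) • ((a - e • 1)⁻¹ʳ * (a - μ • 1)⁻¹ʳ) := by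
  rw [Ring.inverse_sub_inverse (iff_of_true he hμ), sub_sub_sub_cancel_left, ← sub_smul,
    mul_smul_one, smul_mul_assoc]

variable [NormedField 𝕜] [NormedRing A] [NormedAlgebra 𝕜 A]

theorem isUnit_sub_smul_one_of_norm_mul_norm_inverse_lt_one [HasSummableGeomSeries A]
    {a : A} {e μ : 𝕜} (he : IsUnit (a - e • 1)) (h : ‖μ - e‖ * ‖(a - e • 1)⁻¹ʳ‖ < 1) :
    IsUnit (a - μ • 1) := by
  have hfactor : a - μ • 1 = (1 - (μ - e) • (a - e • 1)⁻¹ʳ) * (a - e • 1) := by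
    rw [sub_mul, one_mul, smul_mul_assoc, Ring.inverse_mul_cancel _ he, sub_sub, ← add_smul,
      add_sub_cancel]
  rw [hfactor]
  exact (isUnit_one_sub_of_norm_lt_one ((norm_smul_le _ _).trans_lt h)).mul he

theorem one_sub_norm_mul_norm_inverse_mul_norm_inverse_le {a : A} {e μ : 𝕜}
    (he : IsUnit (a - e • 1)) (hμ : IsUnit (a - μ • 1)) :
    (1 - ‖μ - e‖ * ‖(a - e • 1)⁻¹ʳ‖) * ‖(a - μ • 1)⁻¹ʳ‖ ≤ ‖(a - e • 1)⁻¹ʳ‖ := by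
  set Re := (a - e • 1)⁻¹ʳ
  set Rμ := (a - μ • 1)⁻¹ʳ
  have hresolvent : Rμ = Re - (e - μ) • (Re * Rμ) := by
    rw [← Ring.inverse_sub_smul_one_sub_inverse he hμ, sub_sub_cancel]
  have hbound : ‖Rμ‖ ≤ ‖Re‖ + ‖μ - e‖ * (‖Re‖ * ‖Rμ‖) :=
    calc ‖Rμ‖ ≤ ‖Re‖ + ‖(e - μ) • (Re * Rμ)‖ :=
        (congrArg norm hresolvent).trans_le (norm_sub_le _ _)
      _ ≤ ‖Re‖ + ‖μ - e‖ * (‖Re‖ * ‖Rμ‖) := by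
        rw [norm_sub_rev]
        gcongr
        exact (norm_smul_le _ _).trans (by gcongr; exact norm_mul_le _ _)
  linarith

theorem isUnit_sub_smul_one_and_norm_inverse_le [HasSummableGeomSeries A]
    {a : A} {e μ : 𝕜} {ε : ℝ} (hε : 0 < ε) (he : IsUnit (a - e • 1))
    (hRe : ‖(a - e • 1)⁻¹ʳ‖ ≤ 1 / ε) (hμ : ‖μ - e‖ ≤ ε / 2) :
    IsUnit (a - μ • 1) ∧ ‖(a - μ • 1)⁻¹ʳ‖ ≤ 2 / ε := by
  have hsmall : ‖μ - e‖ * ‖(a - e • 1)⁻¹ʳ‖ ≤ 1 / 2 :=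
    calc ‖μ - e‖ * ‖(a - e • 1)⁻¹ʳ‖ ≤ ε / 2 * (1 / ε) := by gcongr
      _ = 1 / 2 := by field_simp
  have hunit := isUnit_sub_smul_one_of_norm_mul_norm_inverse_lt_one he (by linarith)
  refine ⟨hunit, ?_⟩
  have hbound := one_sub_norm_mul_norm_inverse_mul_norm_inverse_le he hunit
  have hRμ : ‖(a - μ • 1)⁻¹ʳ‖ ≤ 2 * (1 / ε) := by nlinarith [norm_nonneg (a - μ • 1)⁻¹ʳ]
  rwa [mul_one_div] at hRμ

end ShiftedInverse

open scoped Matrix.Norms.L2Operator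

section Schur

variable {m n : Type*} [Fintype m] [Fintype n] [DecidableEq n]

theorem opNorm_eq_l2_opNorm (M : Matrix m n ℝ) : opNorm M = ‖M‖ := rfl

theorem l2_opNorm_schur_sub_schur_le [DecidableEq m] (P : Matrix m m ℝ) (B : Matrix m n ℝ)
    (C : Matrix n m ℝ) (X Y : Matrix n n ℝ) :
    ‖(P - B * X * C) - (P - B * Y * C)‖ ≤ ‖B‖ * ‖X - Y‖ * ‖C‖ := by
  have hdiff : (P - B * X * C) - (P - B * Y * C) = -(B * (X - Y) * C) := by
    rw [Matrix.mul_sub, Matrix.sub_mul]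
    abel
  rw [hdiff, norm_neg]
  exact (l2_opNorm_mul _ _).trans (by gcongr; exact l2_opNorm_mul _ _)

end Schur

theorem schur_complement_shift_general {p q : ℕ}
    (A : Matrix (Fin p) (Fin p) ℝ) (B : Matrix (Fin p) (Fin q) ℝ)
    (C : Matrix (Fin q) (Fin p) ℝ) (D : Matrix (Fin q) (Fin q) ℝ)
    (E ε γ : ℝ) (hε : 0 < ε)
    (hDE : IsUnit (D - E • (1 : Matrix (Fin q) (Fin q) ℝ)))
    (hDEinv : opNorm (D - E • 1)⁻¹ ≤ 1 / ε)
    (hB : opNorm B ≤ γ) (hC : opNorm C ≤ γ)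
    (lam : ℝ) (hlam : |lam - E| ≤ ε / 2) :
    IsUnit (D - lam • (1 : Matrix (Fin q) (Fin q) ℝ)) ∧
    opNorm (D - lam • 1)⁻¹ ≤ 2 / ε ∧
    opNorm ((A - B * (D - E • 1)⁻¹ * C) - (A - B * (D - lam • 1)⁻¹ * C)) ≤
      2 * γ ^ 2 / ε ^ 2 * |lam - E| := by
  simp only [opNorm_eq_l2_opNorm, nonsing_inv_eq_ringInverse] at hDEinv hB hC ⊢
  obtain ⟨hDlam, hDlaminv⟩ := isUnit_sub_smul_one_and_norm_inverse_le hε hDE hDEinv hlam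
  refine ⟨hDlam, hDlaminv, ?_⟩
  have hresolvent : ‖(D - E • 1)⁻¹ʳ - (D - lam • 1)⁻¹ʳ‖ ≤ |lam - E| * (1 / ε * (2 / ε)) := by
    rw [Ring.inverse_sub_smul_one_sub_inverse hDE hDlam, norm_smul, Real.norm_eq_abs,
      abs_sub_comm]
    gcongr
    exact (norm_mul_le _ _).trans (by gcongr)
  have hγ : 0 ≤ γ := (norm_nonneg B).trans hB
  calc _ ≤ ‖B‖ * ‖(D - E • 1)⁻¹ʳ - (D - lam • 1)⁻¹ʳ‖ * ‖C‖ :=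
        l2_opNorm_schur_sub_schur_le _ _ _ _ _
    _ ≤ γ * (|lam - E| * (1 / ε * (2 / ε))) * γ := by gcongr
    _ = 2 * γ ^ 2 / ε ^ 2 * |lam - E| := by field_simp

/-- If `‖(D-E·I)⁻¹‖ ≤ 1/ε`, `‖B‖ ≤ γ`, `‖C‖ ≤ γ`, then for `|λ-E| ≤ ε/2`
the matrix `D - λ·I` is invertible with `‖(D-λ·I)⁻¹‖ ≤ 2/ε`, and the Schur complements
satisfy `‖F_E - F_λ‖ ≤ (2γ²/ε²)·|λ-E|`. -/
theorem schur_complement_shift {p q : ℕ}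
    (A : Matrix (Fin p) (Fin p) ℝ) (B : Matrix (Fin p) (Fin q) ℝ)
    (C : Matrix (Fin q) (Fin p) ℝ) (D : Matrix (Fin q) (Fin q) ℝ)
    (E ε γ : ℝ) (hε : 0 < ε) (hγ : 0 < γ)
    (hDE : IsUnit (D - E • (1 : Matrix (Fin q) (Fin q) ℝ)))
    (hDEinv : opNorm (D - E • 1)⁻¹ ≤ 1 / ε)
    (hB : opNorm B ≤ γ) (hC : opNorm C ≤ γ)
    (lam : ℝ) (hlam : |lam - E| ≤ ε / 2) :
    IsUnit (D - lam • (1 : Matrix (Fin q) (Fin q) ℝ)) ∧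
    opNorm (D - lam • 1)⁻¹ ≤ 2 / ε ∧
    opNorm ((A - B * (D - E • 1)⁻¹ * C) - (A - B * (D - lam • 1)⁻¹ * C)) ≤
      2 * γ ^ 2 / ε ^ 2 * |lam - E| :=
  schur_complement_shift_general A B C D E ε γ hε hDE hDEinv hB hC lam hlam
end

section
/- Let u be a random variable uniformly distributed on [−1,1] and set t = √(u²+1). Then for every E ∈ ℝ and every 0 < ε ≤ 1, the probability that t ∈ [|E|−ε, |E|+ε] is at most 3√ε. -/
open MeasureTheory

/-- The uniform probability measure on `[-1,1]`. -/
noncomputable def unif : Measure ℝ :=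
  ((2 : NNReal))⁻¹ • (volume.restrict (Set.Icc (-1 : ℝ) 1))

instance : IsProbabilityMeasure unif := by
  constructor
  rw [unif, Measure.smul_apply, Measure.restrict_apply_univ, Real.volume_Icc]
  norm_num
  rw [ENNReal.smul_def]
  simp [ENNReal.inv_mul_cancel]

lemma sqrt_nine_mul (ε : ℝ) (hε0 : 0 < ε) : Real.sqrt (9*ε) = 3 * Real.sqrt ε := by
  rw [show (9:ℝ)*ε = 3^2*ε by norm_num, Real.sqrt_mul (by positivity),
    Real.sqrt_sq (by norm_num)]

lemma key_ineq (a ε : ℝ) (ha0 : 0 ≤ a) (hε0 : 0 < ε) (hε1 : ε ≤ 1) :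
    Real.sqrt ((a + ε)^2 - 1) - Real.sqrt ((a - ε)^2 - 1) ≤ 3 * Real.sqrt ε := by
  have hs0 : 0 ≤ Real.sqrt ε := Real.sqrt_nonneg _
  rcases le_or_gt ((a - ε)^2 - 1) 0 with hLc | hLc
  · have haε : a - ε ≤ 1 := by nlinarith [sq_nonneg (a - ε)]
    have hR9 : (a + ε)^2 - 1 ≤ 9*ε := by nlinarith
    have hr3 : Real.sqrt ((a + ε)^2 - 1) ≤ 3 * Real.sqrt ε := by
      rw [← sqrt_nine_mul ε hε0]; exact Real.sqrt_le_sqrt hR9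
    have := Real.sqrt_nonneg ((a - ε)^2 - 1)
    linarith
  · have haε1 : (1:ℝ) < a - ε := by nlinarith
    have hL0 : (0:ℝ) ≤ (a - ε)^2 - 1 := le_of_lt hLc
    set l := Real.sqrt ((a - ε)^2 - 1) with hldef
    have hl0 : 0 ≤ l := Real.sqrt_nonneg _
    have hsl : l^2 = (a - ε)^2 - 1 := Real.sq_sqrt hL0
    have hse : Real.sqrt ε ^ 2 = ε := Real.sq_sqrt hε0.le
    have hls : 0 ≤ l * Real.sqrt ε := mul_nonneg hl0 hs0
    have hmid : (4*a - 9) * ε ≤ 6 * (l * Real.sqrt ε) := by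
      rcases le_or_gt (4*a) 9 with hc | hc
      · nlinarith
      · have ht : (0:ℝ) < a - ε - 1 := by linarith
        have hb : (4*a - 9)^2 ≤ 16*(a - ε - 1)^2 := by nlinarith
        have hsq2 : ((4*a - 9) * ε)^2 ≤ (6 * (l * Real.sqrt ε))^2 := by
          have hrw : (6 * (l * Real.sqrt ε))^2 = 36 * ((a - ε)^2 - 1) * ε := by
            rw [mul_pow, mul_pow, hsl, hse]; ring
          rw [hrw]
          have e1 : ((4*a - 9) * ε)^2 ≤ 16*(a - ε - 1)^2*ε^2 := by
            calc ((4*a - 9) * ε)^2 = (4*a - 9)^2 * ε^2 := by ring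
              _ ≤ 16*(a - ε - 1)^2*ε^2 :=
                  mul_le_mul_of_nonneg_right hb (sq_nonneg ε)
          have e2 : 16*(a - ε - 1)^2*ε^2 ≤ 16*(a - ε - 1)^2*ε := by
            have h2 : ε^2 ≤ ε := by nlinarith
            have : (0:ℝ) ≤ 16*(a - ε - 1)^2 := by positivity
            exact mul_le_mul_of_nonneg_left h2 this
          have e3 : 16*(a - ε - 1)^2*ε ≤ 36 * ((a - ε)^2 - 1) * ε := by
            have h3 : 16*(a - ε - 1)^2 ≤ 36 * ((a - ε)^2 - 1) := by
              nlinarith [mul_pos ht ht]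
            exact mul_le_mul_of_nonneg_right h3 hε0.le
          linarith
        nlinarith [hsq2, hls]
    have hmain : (a + ε)^2 - 1 ≤ (l + 3 * Real.sqrt ε)^2 := by
      have hexp : (l + 3 * Real.sqrt ε)^2
          = ((a - ε)^2 - 1) + 6 * (l * Real.sqrt ε) + 9 * ε := by
        have h : (l + 3 * Real.sqrt ε)^2
            = l^2 + 6 * (l * Real.sqrt ε) + 9 * Real.sqrt ε ^ 2 := by ring
        rw [h, hsl, hse]
      rw [hexp]; nlinarith
    have hr' : Real.sqrt ((a + ε)^2 - 1) ≤ l + 3 * Real.sqrt ε := by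
      have h := Real.sqrt_le_sqrt hmain
      rwa [Real.sqrt_sq (by positivity)] at h
    linarith

lemma unif_Icc_le (x y : ℝ) :
    unif (Set.Icc x y) ≤ (2:ENNReal)⁻¹ * ENNReal.ofReal (y - x) := by
  rw [unif, Measure.smul_apply, Measure.restrict_apply measurableSet_Icc,
    ENNReal.smul_def, smul_eq_mul,
    ENNReal.coe_inv (by norm_num : (2:NNReal) ≠ 0), ENNReal.coe_two]
  gcongr
  calc volume (Set.Icc x y ∩ Set.Icc (-1:ℝ) 1) ≤ volume (Set.Icc x y) :=
        measure_mono Set.inter_subset_left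
    _ = ENNReal.ofReal (y - x) := Real.volume_Icc

/-- if `u` is uniform on `[-1,1]` and `t = √(u²+1)`, then for every `E` and
`0 < ε ≤ 1`, `P(t ∈ [|E|-ε, |E|+ε]) ≤ 3√ε`. -/
theorem resonance_probability (E ε : ℝ) (hε0 : 0 < ε) (hε1 : ε ≤ 1) :
    unif {u : ℝ | Real.sqrt (u ^ 2 + 1) ∈ Set.Icc (|E| - ε) (|E| + ε)} ≤
      ENNReal.ofReal (3 * Real.sqrt ε) := by
  have ha0 : 0 ≤ |E| := abs_nonneg E
  set l := Real.sqrt ((|E| - ε)^2 - 1) with hldef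
  set r := Real.sqrt ((|E| + ε)^2 - 1) with hrdef
  have hsub : {u : ℝ | Real.sqrt (u ^ 2 + 1) ∈ Set.Icc (|E| - ε) (|E| + ε)} ⊆
      Set.Icc (-r) (-l) ∪ Set.Icc l r := by
    intro u hu
    obtain ⟨h1, h2⟩ := hu
    have hss : 0 ≤ Real.sqrt (u^2+1) := Real.sqrt_nonneg _
    have hsq : Real.sqrt (u^2+1) ^ 2 = u^2 + 1 := Real.sq_sqrt (by positivity)
    have hup : u^2 ≤ (|E| + ε)^2 - 1 := by
      have h := pow_le_pow_left₀ hss h2 2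
      rw [hsq] at h; linarith
    have hlow : (|E| - ε)^2 - 1 ≤ u^2 := by
      rcases le_or_gt 0 (|E| - ε) with hc | hc
      · have h := pow_le_pow_left₀ hc h1 2
        rw [hsq] at h; linarith
      · nlinarith [sq_nonneg u]
    have habs_le : |u| ≤ r := by
      rw [← Real.sqrt_sq_eq_abs]; exact Real.sqrt_le_sqrt hup
    have hle_abs : l ≤ |u| := by
      rw [← Real.sqrt_sq_eq_abs]; exact Real.sqrt_le_sqrt hlow
    rcases le_or_gt 0 u with hu0 | hu0
    · right
      rw [abs_of_nonneg hu0] at habs_le hle_abs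
      exact ⟨hle_abs, habs_le⟩
    · left
      rw [abs_of_neg hu0] at habs_le hle_abs
      exact ⟨by linarith, by linarith⟩
  have hkey : r - l ≤ 3 * Real.sqrt ε := key_ineq |E| ε ha0 hε0 hε1
  calc unif {u : ℝ | Real.sqrt (u ^ 2 + 1) ∈ Set.Icc (|E| - ε) (|E| + ε)}
      ≤ unif (Set.Icc (-r) (-l) ∪ Set.Icc l r) := measure_mono hsub
    _ ≤ unif (Set.Icc (-r) (-l)) + unif (Set.Icc l r) := measure_union_le _ _
    _ ≤ (2:ENNReal)⁻¹ * ENNReal.ofReal (-l - -r) + (2:ENNReal)⁻¹ * ENNReal.ofReal (r - l) :=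
        add_le_add (unif_Icc_le _ _) (unif_Icc_le _ _)
    _ = ENNReal.ofReal (r - l) := by
        rw [show -l - -r = r - l by ring, ← mul_add, ← two_mul, ← mul_assoc,
          ENNReal.inv_mul_cancel two_ne_zero ENNReal.ofNat_ne_top, one_mul]
    _ ≤ ENNReal.ofReal (3 * Real.sqrt ε) := ENNReal.ofReal_le_ofReal hkey
end

section
/- Let Λ be a finite subset of ℤ^d and let (u_x)_{x∈Λ} be i.i.d. random variables uniformly distributed on [−1,1], with t_x = √(u_x²+1). Then for every 0 < δ ≤ 1, the probability that there exist distinct x, y ∈ Λ with |t_x − t_y| < 2δ is at most 3·√δ·|Λ|². -/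
open MeasureTheory
open scoped ENNReal NNReal

/-- The product of uniform measures on `[-1,1]^ι` (i.i.d. uniform random variables). -/
noncomputable def unifPi (ι : Type*) [Fintype ι] : Measure (ι → ℝ) :=
  Measure.pi fun _ => unif

instance (ι : Type*) [Fintype ι] : IsProbabilityMeasure (unifPi ι) := by
  unfold unifPi; infer_instance

lemma unif_Ioo_le (a b : ℝ) : unif (Set.Ioo a b) ≤ ENNReal.ofReal ((b - a) / 2) := by
  rw [unif, Measure.smul_apply, Measure.restrict_apply measurableSet_Ioo,
    ENNReal.smul_def, smul_eq_mul]
  have h1 : volume (Set.Ioo a b ∩ Set.Icc (-1 : ℝ) 1) ≤ ENNReal.ofReal (b - a) := by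
    refine (measure_mono Set.inter_subset_left).trans ?_
    rw [Real.volume_Ioo]
  rw [show (((2 : NNReal)⁻¹ : NNReal) : ℝ≥0∞) = (2 : ℝ≥0∞)⁻¹ by simp]
  calc (2 : ℝ≥0∞)⁻¹ * volume (Set.Ioo a b ∩ Set.Icc (-1 : ℝ) 1)
      ≤ (2 : ℝ≥0∞)⁻¹ * ENNReal.ofReal (b - a) := by
        exact mul_le_mul_right h1 _
    _ = ENNReal.ofReal ((b - a) / 2) := by
        rw [ENNReal.ofReal_div_of_pos (by norm_num), ENNReal.ofReal_ofNat,
          ENNReal.div_eq_inv_mul]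

lemma unif_Icc_one : unif (Set.Icc (-1 : ℝ) 1) = 1 := by
  rw [unif, Measure.smul_apply, Measure.restrict_apply measurableSet_Icc,
    Set.inter_self, Real.volume_Icc, ENNReal.smul_def, smul_eq_mul]
  norm_num
  exact ENNReal.inv_mul_cancel (by norm_num) (by norm_num)

variable {ι : Type*} [Fintype ι] [DecidableEq ι]

lemma unifPi_single (x : ι) (I : Set ℝ) :
    unifPi ι {u : ι → ℝ | u x ∈ I} = unif I := by
  have hset : {u : ι → ℝ | u x ∈ I} =
      Set.pi Set.univ (fun z => if z = x then I else Set.univ) := by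
    ext u
    simp only [Set.mem_setOf_eq, Set.mem_pi, Set.mem_univ, true_implies]
    constructor
    · intro h z
      split_ifs with hz
      · subst hz; exact h
      · trivial
    · intro h
      have := h x
      simpa using this
  rw [hset, unifPi, Measure.pi_pi]
  have : ∀ z, unif (if z = x then I else Set.univ) = if z = x then unif I else 1 := by
    intro z; split_ifs <;> simp
  simp_rw [this]
  simp [Finset.prod_ite_eq']

lemma unifPi_pair (x y : ι) (hxy : x ≠ y) :
    (unifPi ι).map (fun u => (u x, u y)) = unif.prod unif := by
  refine (Measure.prod_eq ?_).symm
  intro s t hs ht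
  rw [Measure.map_apply (by exact (measurable_pi_apply x).prodMk (measurable_pi_apply y))
    (hs.prod ht)]
  have hset : (fun u : ι → ℝ => (u x, u y)) ⁻¹' (s ×ˢ t) =
      Set.pi Set.univ (fun z => if z = x then s else if z = y then t else Set.univ) := by
    ext u
    simp only [Set.mem_preimage, Set.mem_prod, Set.mem_pi, Set.mem_univ, true_implies]
    constructor
    · rintro ⟨h1, h2⟩ z
      split_ifs with hz hz'
      · subst hz; exact h1
      · subst hz'; exact h2
      · trivial
    · intro h
      refine ⟨?_, ?_⟩
      · have := h x; simpa using this
      · have := h y; simpa [hxy.symm] using this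
  rw [hset, unifPi, Measure.pi_pi]
  have hterm : ∀ z, unif (if z = x then s else if z = y then t else Set.univ) =
      if z = x then unif s else if z = y then unif t else 1 := by
    intro z; split_ifs <;> simp
  simp_rw [hterm]
  rw [← Finset.mul_prod_erase Finset.univ _ (Finset.mem_univ x), if_pos rfl]
  rw [← Finset.mul_prod_erase (Finset.univ.erase x) _
    (Finset.mem_erase.mpr ⟨hxy.symm, Finset.mem_univ y⟩), if_neg hxy.symm, if_pos rfl]
  rw [Finset.prod_eq_one, mul_one]
  intro z hz
  simp only [Finset.mem_erase] at hz
  rw [if_neg hz.2.1, if_neg hz.1]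

lemma prod_strip (r : ℝ) (hr : 0 ≤ r) :
    (unif.prod unif) {p : ℝ × ℝ | |p.1 - p.2| < r ∨ |p.1 + p.2| < r} ≤
      ENNReal.ofReal (2 * r) := by
  have hm1 : MeasurableSet {p : ℝ × ℝ | |p.1 - p.2| < r} :=
    measurableSet_lt ((measurable_fst.sub measurable_snd).abs) measurable_const
  have hm2 : MeasurableSet {p : ℝ × ℝ | |p.1 + p.2| < r} :=
    measurableSet_lt ((measurable_fst.add measurable_snd).abs) measurable_const
  have hsub : {p : ℝ × ℝ | |p.1 - p.2| < r ∨ |p.1 + p.2| < r} =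
      {p : ℝ × ℝ | |p.1 - p.2| < r} ∪ {p : ℝ × ℝ | |p.1 + p.2| < r} := rfl
  have hb1 : (unif.prod unif) {p : ℝ × ℝ | |p.1 - p.2| < r} ≤ ENNReal.ofReal r := by
    rw [Measure.prod_apply hm1]
    have : ∀ a : ℝ, unif (Prod.mk a ⁻¹' {p : ℝ × ℝ | |p.1 - p.2| < r}) ≤
        ENNReal.ofReal r := by
      intro a
      have : Prod.mk a ⁻¹' {p : ℝ × ℝ | |p.1 - p.2| < r} = Set.Ioo (a - r) (a + r) := by
        ext b
        simp only [Set.mem_preimage, Set.mem_setOf_eq, Set.mem_Ioo, abs_lt]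
        constructor <;> intro h <;> constructor <;> linarith [h.1, h.2]
      rw [this]
      refine (unif_Ioo_le _ _).trans ?_
      apply ENNReal.ofReal_le_ofReal; linarith
    calc ∫⁻ a, unif (Prod.mk a ⁻¹' {p : ℝ × ℝ | |p.1 - p.2| < r}) ∂unif
        ≤ ∫⁻ _, ENNReal.ofReal r ∂unif := lintegral_mono this
      _ = ENNReal.ofReal r := by rw [lintegral_const, measure_univ, mul_one]
  have hb2 : (unif.prod unif) {p : ℝ × ℝ | |p.1 + p.2| < r} ≤ ENNReal.ofReal r := by
    rw [Measure.prod_apply hm2]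
    have : ∀ a : ℝ, unif (Prod.mk a ⁻¹' {p : ℝ × ℝ | |p.1 + p.2| < r}) ≤
        ENNReal.ofReal r := by
      intro a
      have : Prod.mk a ⁻¹' {p : ℝ × ℝ | |p.1 + p.2| < r} = Set.Ioo (-a - r) (-a + r) := by
        ext b
        simp only [Set.mem_preimage, Set.mem_setOf_eq, Set.mem_Ioo, abs_lt]
        constructor <;> intro h <;> constructor <;> linarith [h.1, h.2]
      rw [this]
      refine (unif_Ioo_le _ _).trans ?_
      apply ENNReal.ofReal_le_ofReal; linarith
    calc ∫⁻ a, unif (Prod.mk a ⁻¹' {p : ℝ × ℝ | |p.1 + p.2| < r}) ∂unif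
        ≤ ∫⁻ _, ENNReal.ofReal r ∂unif := lintegral_mono this
      _ = ENNReal.ofReal r := by rw [lintegral_const, measure_univ, mul_one]
  rw [hsub]
  refine (measure_union_le _ _).trans ?_
  refine le_trans (add_le_add hb1 hb2) ?_
  rw [← ENNReal.ofReal_add hr hr]
  apply ENNReal.ofReal_le_ofReal; linarith

lemma unifPi_pairset_le {ι : Type*} [Fintype ι] [DecidableEq ι] (x y : ι) (hxy : x ≠ y)
    (r : ℝ) (hr : 0 ≤ r) :
    unifPi ι {u : ι → ℝ | |u x - u y| < r ∨ |u x + u y| < r} ≤ ENNReal.ofReal (2 * r) := by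
  have hm : MeasurableSet {p : ℝ × ℝ | |p.1 - p.2| < r ∨ |p.1 + p.2| < r} :=
    (measurableSet_lt ((measurable_fst.sub measurable_snd).abs) measurable_const).union
      (measurableSet_lt ((measurable_fst.add measurable_snd).abs) measurable_const)
  have hT : Measurable (fun u : ι → ℝ => (u x, u y)) :=
    (measurable_pi_apply x).prodMk (measurable_pi_apply y)
  have : {u : ι → ℝ | |u x - u y| < r ∨ |u x + u y| < r} =
      (fun u : ι → ℝ => (u x, u y)) ⁻¹' {p : ℝ × ℝ | |p.1 - p.2| < r ∨ |p.1 + p.2| < r} := rfl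
  rw [this, ← Measure.map_apply hT hm, unifPi_pair x y hxy]
  exact prod_strip r hr

lemma abs_add_abs_le_max (a b : ℝ) : |a| + |b| ≤ max |a - b| |a + b| := by
  rcases le_total 0 a with ha | ha <;> rcases le_total 0 b with hb | hb
  · rw [abs_of_nonneg ha, abs_of_nonneg hb]
    exact (le_abs_self _).trans (le_max_right _ _)
  · rw [abs_of_nonneg ha, abs_of_nonpos hb]
    exact (le_trans (by linarith [le_abs_self (a - b)]) (le_max_left _ _))
  · rw [abs_of_nonpos ha, abs_of_nonneg hb]
    exact (le_trans (by linarith [neg_abs_le (a - b)]) (le_max_left _ _))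
  · rw [abs_of_nonpos ha, abs_of_nonpos hb]
    exact (le_trans (by linarith [neg_abs_le (a + b)]) (le_max_right _ _))

lemma key (δ a b : ℝ) (hδ : 0 < δ) (ha : |a| ≤ 1) (hb : |b| ≤ 1)
    (h : |Real.sqrt (a ^ 2 + 1) - Real.sqrt (b ^ 2 + 1)| < 2 * δ) :
    |a| < 2 * Real.sqrt δ ∨ |b| < 2 * Real.sqrt δ ∨
      |a - b| < Real.sqrt 2 * Real.sqrt δ ∨ |a + b| < Real.sqrt 2 * Real.sqrt δ := by
  set s := Real.sqrt δ with hs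
  set q := Real.sqrt 2 with hq
  have hs0 : 0 < s := Real.sqrt_pos.mpr hδ
  have hs2 : s ^ 2 = δ := Real.sq_sqrt hδ.le
  have hq0 : 0 < q := Real.sqrt_pos.mpr (by norm_num)
  have hq2 : q ^ 2 = 2 := Real.sq_sqrt (by norm_num)
  rcases lt_or_ge |a| (2 * s) with h1 | h1
  · exact Or.inl h1
  rcases lt_or_ge |b| (2 * s) with h2 | h2
  · exact Or.inr (Or.inl h2)
  right; right
  set fa := Real.sqrt (a ^ 2 + 1) with hfa
  set fb := Real.sqrt (b ^ 2 + 1) with hfb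
  have hfa2 : fa ^ 2 = a ^ 2 + 1 := Real.sq_sqrt (by positivity)
  have hfb2 : fb ^ 2 = b ^ 2 + 1 := Real.sq_sqrt (by positivity)
  have hfa0 : 0 ≤ fa := Real.sqrt_nonneg _
  have hfb0 : 0 ≤ fb := Real.sqrt_nonneg _
  have ha2 : a ^ 2 ≤ 1 := by nlinarith [sq_abs a, abs_nonneg a]
  have hb2 : b ^ 2 ≤ 1 := by nlinarith [sq_abs b, abs_nonneg b]
  have hfaq : fa ≤ q := by
    rw [hfa, hq]; exact Real.sqrt_le_sqrt (by linarith)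
  have hfbq : fb ≤ q := by
    rw [hfb, hq]; exact Real.sqrt_le_sqrt (by linarith)
  have heq : a ^ 2 - b ^ 2 = (fa - fb) * (fa + fb) := by nlinarith
  have habs : |a ^ 2 - b ^ 2| < 4 * q * δ := by
    rw [heq, abs_mul, abs_of_nonneg (by linarith : (0:ℝ) ≤ fa + fb)]
    nlinarith [abs_nonneg (fa - fb)]
  have hmul : |a - b| * |a + b| < 4 * q * δ := by
    rw [← abs_mul]
    calc |(a - b) * (a + b)| = |a ^ 2 - b ^ 2| := by ring_nf
      _ < _ := habs
  have hmax := abs_add_abs_le_max a b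
  rcases le_total |a - b| |a + b| with hc | hc
  · left
    have h4 : 4 * s ≤ |a + b| := by
      rw [max_eq_right hc] at hmax; linarith
    have hkey : |a - b| * (4 * s) < 4 * q * s ^ 2 := by
      calc |a - b| * (4 * s) ≤ |a - b| * |a + b| :=
            mul_le_mul_of_nonneg_left h4 (abs_nonneg (a - b))
        _ < 4 * q * δ := hmul
        _ = 4 * q * s ^ 2 := by rw [hs2]
    exact lt_of_mul_lt_mul_right
      (by rw [show q * s * (4 * s) = 4 * q * s ^ 2 by ring]; exact hkey) (by positivity)
  · right
    have h4 : 4 * s ≤ |a - b| := by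
      rw [max_eq_left hc] at hmax; linarith
    have hkey : |a + b| * (4 * s) < 4 * q * s ^ 2 := by
      calc |a + b| * (4 * s) ≤ |a + b| * |a - b| :=
            mul_le_mul_of_nonneg_left h4 (abs_nonneg (a + b))
        _ = |a - b| * |a + b| := by ring
        _ < 4 * q * δ := hmul
        _ = 4 * q * s ^ 2 := by rw [hs2]
    exact lt_of_mul_lt_mul_right
      (by rw [show q * s * (4 * s) = 4 * q * s ^ 2 by ring]; exact hkey) (by positivity)

set_option maxHeartbeats 1000000 in
lemma level_spacing_general (ι : Type*) [Fintype ι] [DecidableEq ι] (δ : ℝ)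
    (hδ0 : 0 < δ) :
    unifPi ι
        {u : ι → ℝ | ∃ x y : ι, x ≠ y ∧
          |Real.sqrt (u x ^ 2 + 1) - Real.sqrt (u y ^ 2 + 1)| < 2 * δ} ≤
      ENNReal.ofReal (3 * Real.sqrt δ * (Fintype.card ι : ℝ) ^ 2) := by
  set N := Fintype.card ι with hN
  set s := Real.sqrt δ with hsdef
  have hs0 : 0 < s := Real.sqrt_pos.mpr hδ0
  set r := Real.sqrt 2 * s with hrdef
  have hr0 : 0 ≤ r := by positivity
  set E := {u : ι → ℝ | ∃ x y : ι, x ≠ y ∧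
      |Real.sqrt (u x ^ 2 + 1) - Real.sqrt (u y ^ 2 + 1)| < 2 * δ} with hE
  set Box := Set.pi (Set.univ : Set ι) (fun _ => Set.Icc (-1 : ℝ) 1) with hBox
  set A : ι → Set (ι → ℝ) := fun x => {u | |u x| < 2 * s} with hA
  set C : ι × ι → Set (ι → ℝ) := fun p =>
    if p.1 = p.2 then ∅ else {u | |u p.1 - u p.2| < r ∨ |u p.1 + u p.2| < r} with hCdef
  have hBoxMeas : MeasurableSet Box := MeasurableSet.univ_pi fun _ => measurableSet_Icc
  have hBox1 : unifPi ι Box = 1 := by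
    rw [hBox, unifPi, Measure.pi_pi]; simp [unif_Icc_one]
  have hBoxc : unifPi ι Boxᶜ = 0 := by
    rw [measure_compl hBoxMeas (measure_ne_top _ _), hBox1, measure_univ, tsub_self]
  have hincl : E ⊆ ((⋃ x, A x) ∪ ⋃ p : ι × ι, C p) ∪ Boxᶜ := by
    intro u hu
    by_cases hub : u ∈ Box
    · left
      obtain ⟨x, y, hxy, hlt⟩ := hu
      have hax : |u x| ≤ 1 := abs_le.mpr (hub x (Set.mem_univ x))
      have hay : |u y| ≤ 1 := abs_le.mpr (hub y (Set.mem_univ y))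
      rcases key δ (u x) (u y) hδ0 hax hay hlt with h | h | h | h
      · exact Or.inl (Set.mem_iUnion.mpr ⟨x, h⟩)
      · exact Or.inl (Set.mem_iUnion.mpr ⟨y, h⟩)
      · refine Or.inr (Set.mem_iUnion.mpr ⟨(x, y), ?_⟩)
        rw [hCdef]; simp only; rw [if_neg hxy]
        exact Or.inl h
      · refine Or.inr (Set.mem_iUnion.mpr ⟨(x, y), ?_⟩)
        rw [hCdef]; simp only; rw [if_neg hxy]
        exact Or.inr h
    · exact Or.inr hub
  have hAx : ∀ x : ι, unifPi ι (A x) ≤ ENNReal.ofReal (2 * s) := by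
    intro x
    have hAeq : A x = {u : ι → ℝ | u x ∈ Set.Ioo (-(2 * s)) (2 * s)} := by
      ext u
      simp only [hA, Set.mem_setOf_eq, Set.mem_Ioo, abs_lt]
    rw [hAeq, unifPi_single]
    refine (unif_Ioo_le _ _).trans ?_
    apply ENNReal.ofReal_le_ofReal; linarith
  have hCp : ∀ p : ι × ι,
      unifPi ι (C p) ≤ if p.1 = p.2 then 0 else ENNReal.ofReal (2 * r) := by
    intro p
    rw [hCdef]; simp only
    split_ifs with h
    · simp
    · exact unifPi_pairset_le p.1 p.2 h r hr0
  have hsumA : ∑' x : ι, unifPi ι (A x) ≤ (N : ℝ≥0∞) * ENNReal.ofReal (2 * s) := by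
    rw [tsum_fintype]
    refine le_trans (Finset.sum_le_card_nsmul _ _ _ (fun x _ => hAx x)) ?_
    rw [nsmul_eq_mul, Finset.card_univ, ← hN]
  have hsumC : ∑' p : ι × ι, unifPi ι (C p) ≤
      ((N * N - N : ℕ) : ℝ≥0∞) * ENNReal.ofReal (2 * r) := by
    rw [tsum_fintype]
    calc ∑ p : ι × ι, unifPi ι (C p)
        ≤ ∑ p : ι × ι, (if p.1 = p.2 then 0 else ENNReal.ofReal (2 * r)) :=
          Finset.sum_le_sum (fun p _ => hCp p)
      _ = ((Finset.univ.filter fun p : ι × ι => ¬ p.1 = p.2).card : ℕ) •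
            ENNReal.ofReal (2 * r) := by
          rw [Finset.sum_ite]
          simp [Finset.sum_const]
      _ = ((N * N - N : ℕ) : ℝ≥0∞) * ENNReal.ofReal (2 * r) := by
          have hfe : (Finset.univ.filter fun p : ι × ι => ¬ p.1 = p.2) =
              (Finset.univ : Finset ι).offDiag := by
            ext p; simp [Finset.mem_offDiag]
          rw [nsmul_eq_mul, hfe, Finset.offDiag_card, Finset.card_univ, ← hN]
  have hNN : N ≤ N * N := by
    rcases Nat.eq_zero_or_pos N with h | h
    · simp [h]
    · exact Nat.le_mul_of_pos_left _ h
  have hq15 : Real.sqrt 2 ≤ 1.5 := by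
    nlinarith [Real.sq_sqrt (by norm_num : (0:ℝ) ≤ 2), Real.sqrt_nonneg 2]
  have hN1 : (0:ℝ) ≤ (N : ℝ) * (N : ℝ) - (N : ℝ) := by
    rcases Nat.eq_zero_or_pos N with h | h
    · simp [h]
    · have h1 : (1:ℝ) ≤ (N : ℝ) := by exact_mod_cast h
      nlinarith
  have hfinal : (N : ℝ≥0∞) * ENNReal.ofReal (2 * s) +
      ((N * N - N : ℕ) : ℝ≥0∞) * ENNReal.ofReal (2 * r) ≤
      ENNReal.ofReal (3 * s * (N : ℝ) ^ 2) := by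
    rw [← ENNReal.ofReal_natCast N, ← ENNReal.ofReal_natCast (N * N - N),
      ← ENNReal.ofReal_mul (Nat.cast_nonneg _), ← ENNReal.ofReal_mul (Nat.cast_nonneg _),
      ← ENNReal.ofReal_add (by positivity) (by positivity)]
    apply ENNReal.ofReal_le_ofReal
    have hcast : ((N * N - N : ℕ) : ℝ) =
        (N : ℝ) * (N : ℝ) - (N : ℝ) := by
      rw [Nat.cast_sub hNN]; push_cast; ring
    rw [hcast, hrdef]
    have hX : (0:ℝ) ≤ (1.5 - Real.sqrt 2) * ((N : ℝ) * (N : ℝ) - (N : ℝ)) * s :=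
      mul_nonneg (mul_nonneg (by linarith) hN1) hs0.le
    have hsN : (0:ℝ) ≤ s * (N : ℝ) := mul_nonneg hs0.le (Nat.cast_nonneg _)
    nlinarith [hX, hsN]
  calc unifPi ι E ≤ unifPi ι (((⋃ x, A x) ∪ ⋃ p : ι × ι, C p) ∪ Boxᶜ) :=
        measure_mono hincl
    _ ≤ unifPi ι ((⋃ x, A x) ∪ ⋃ p : ι × ι, C p) + unifPi ι Boxᶜ := measure_union_le _ _
    _ = unifPi ι ((⋃ x, A x) ∪ ⋃ p : ι × ι, C p) := by rw [hBoxc, add_zero]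
    _ ≤ unifPi ι (⋃ x, A x) + unifPi ι (⋃ p : ι × ι, C p) := measure_union_le _ _
    _ ≤ (∑' x : ι, unifPi ι (A x)) + ∑' p : ι × ι, unifPi ι (C p) :=
        add_le_add (measure_iUnion_le _) (measure_iUnion_le _)
    _ ≤ (N : ℝ≥0∞) * ENNReal.ofReal (2 * s) +
          ((N * N - N : ℕ) : ℝ≥0∞) * ENNReal.ofReal (2 * r) :=
        add_le_add hsumA hsumC
    _ ≤ ENNReal.ofReal (3 * s * (N : ℝ) ^ 2) := hfinal

/-- for i.i.d. uniform `(u_x)_{x∈Λ}` on `[-1,1]` and `t_x = √(u_x²+1)`, the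
probability that two distinct positions have `|t_x - t_y| < 2δ` is at most `3·√δ·|Λ|²`. -/
theorem level_spacing_free (d : ℕ) (Λ : Finset ((Fin d) → ℤ)) (δ : ℝ)
    (hδ0 : 0 < δ) (hδ1 : δ ≤ 1) :
    unifPi {x // x ∈ Λ}
        {u : {x // x ∈ Λ} → ℝ | ∃ x y : {x // x ∈ Λ}, x ≠ y ∧
          |Real.sqrt (u x ^ 2 + 1) - Real.sqrt (u y ^ 2 + 1)| < 2 * δ} ≤
      ENNReal.ofReal (3 * Real.sqrt δ * (Λ.card : ℝ) ^ 2) := by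
  have h := level_spacing_general {x // x ∈ Λ} δ hδ0
  have hcard : Fintype.card {x // x ∈ Λ} = Λ.card := Fintype.card_coe Λ
  rwa [hcard] at h
end

section
/- Fix E ∈ ℝ and ε > 0 with 144·d²·ε ≤ 1. Call a position x ∈ Λ ε-resonant if min(|√(u_x²+1) − E|, |√(u_x²+1) + E|) ≤ ε, and let R ⊆ Λ be the set of ε-resonant positions. Then for any two positions x, y ∈ Λ, the probability that x and y lie in the same connected component of R (where two positions of R are adjacent if their ℓ¹ distance equals 1) is at most (12d√ε)^{|x−y|+1}. -/
open MeasureTheory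

/-- The ℓ¹ distance `|x-y| = Σᵢ |xᵢ-yᵢ|` on `ℤ^d`, as a natural number. -/
def dist1 {d : ℕ} (x y : Fin d → ℤ) : ℕ := ∑ i, (x i - y i).natAbs

/-!
If `x` and `y` lie in one resonant cluster, erasing loops from a connecting walk leaves a
self-avoiding nearest-neighbour path of some length `m ≥ |x - y|` all of whose sites are resonant.
At most `(2d)^m` paths of length `m` start at `x`, and by independence a given one is entirely
resonant with probability at most `p^(m+1)`, where `p ≤ 3√ε` bounds the probability that a single
site is resonant: resonance pins `u_x²` to a window of width `8ε` around `E² - 1`. Summing over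
`m ≥ |x - y|` gives a geometric series of ratio `2dp ≤ 1/2`.
-/

open Finset
open scoped ENNReal

lemma Real.sqrt_sub_sqrt_le_sqrt_sub (x y : ℝ) : √x - √y ≤ √(x - y) := by
  rcases le_total x y with hxy | hyx
  · linarith [Real.sqrt_le_sqrt hxy, Real.sqrt_nonneg (x - y)]
  rcases le_total y 0 with hy | hy
  · rw [Real.sqrt_eq_zero'.mpr hy, sub_zero]
    exact Real.sqrt_le_sqrt (by linarith)
  have hle : √y ≤ √x := Real.sqrt_le_sqrt hyx
  rw [Real.le_sqrt (sub_nonneg.mpr hle) (sub_nonneg.mpr hyx)]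
  nlinarith [Real.sq_sqrt hy, Real.sq_sqrt (hy.trans hyx), Real.sqrt_nonneg y]

lemma Real.volume_setOf_abs_sq_sub_le_le (c δ : ℝ) :
    volume {t : ℝ | |t ^ 2 - c| ≤ δ} ≤ ENNReal.ofReal (2 * √(2 * δ)) := by
  set p := √(c - δ)
  set q := √(c + δ)
  have hsub : {t : ℝ | |t ^ 2 - c| ≤ δ} ⊆ Set.Icc (-q) (-p) ∪ Set.Icc p q := by
    intro t (ht : |t ^ 2 - c| ≤ δ)
    rw [abs_le] at ht
    have hp : p ≤ |t| := by
      rw [← Real.sqrt_sq_eq_abs]; exact Real.sqrt_le_sqrt (by linarith)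
    have hq : |t| ≤ q := by
      rw [← Real.sqrt_sq_eq_abs]; exact Real.sqrt_le_sqrt (by linarith)
    rcases le_total 0 t with h | h
    · rw [abs_of_nonneg h] at hp hq
      exact Or.inr ⟨hp, hq⟩
    · rw [abs_of_nonpos h] at hp hq
      exact Or.inl ⟨by linarith, by linarith⟩
  have hqp : q - p ≤ √(2 * δ) := by
    simpa only [show c + δ - (c - δ) = 2 * δ by ring] using
      Real.sqrt_sub_sqrt_le_sqrt_sub (c + δ) (c - δ)
  calc volume {t : ℝ | |t ^ 2 - c| ≤ δ}
      ≤ volume (Set.Icc (-q) (-p)) + volume (Set.Icc p q) :=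
        (measure_mono hsub).trans (measure_union_le _ _)
    _ = ENNReal.ofReal (q - p) + ENNReal.ofReal (q - p) := by
      rw [Real.volume_Icc, Real.volume_Icc, neg_sub_neg]
    _ ≤ ENNReal.ofReal √(2 * δ) + ENNReal.ofReal √(2 * δ) := by gcongr
    _ = ENNReal.ofReal (2 * √(2 * δ)) := by
      rw [← ENNReal.ofReal_add (by positivity) (by positivity), ← two_mul]

def resonantSet (E ε : ℝ) : Set ℝ :=
  {t | min |√(t ^ 2 + 1) - E| |√(t ^ 2 + 1) + E| ≤ ε}

lemma abs_sq_sub_le_of_mem_resonantSet {E ε t : ℝ} (ht : t ∈ resonantSet E ε) (ht1 : |t| ≤ 1)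
    (hε : ε ≤ 1) : |t ^ 2 - (E ^ 2 - 1)| ≤ 4 * ε := by
  set s := √(t ^ 2 + 1)
  have hs0 : 0 ≤ s := Real.sqrt_nonneg _
  have hs2 : s ^ 2 = t ^ 2 + 1 := Real.sq_sqrt (by positivity)
  have hs : s ≤ 3 / 2 := by nlinarith [sq_abs t, abs_nonneg t]
  have hmin : min |s - E| |s + E| ≤ ε := ht
  have hmax : max |s - E| |s + E| ≤ min |s - E| |s + E| + 3 := by
    have h := abs_abs_sub_abs_le_abs_sub (s - E) (-(s + E))
    rw [abs_neg, show s - E - -(s + E) = 2 * s by ring,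
      abs_of_nonneg (by positivity : 0 ≤ 2 * s), ← max_sub_min_eq_abs, max_comm, min_comm] at h
    linarith
  have hfactor : t ^ 2 - (E ^ 2 - 1) = (s - E) * (s + E) := by linear_combination -hs2
  rw [hfactor, abs_mul, ← min_mul_max]
  have hmin0 : 0 ≤ min |s - E| |s + E| := le_min (abs_nonneg _) (abs_nonneg _)
  nlinarith [mul_le_mul_of_nonneg_left hmax hmin0]

lemma unif_apply (A : Set ℝ) : unif A = 2⁻¹ * volume (A ∩ Set.Icc (-1) 1) := by
  rw [unif, Measure.smul_apply, Measure.restrict_apply' measurableSet_Icc, ENNReal.smul_def,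
    smul_eq_mul, ENNReal.coe_inv two_ne_zero, ENNReal.coe_ofNat]

lemma unif_resonantSet_le (E : ℝ) {ε : ℝ} (hε0 : 0 ≤ ε) (hε1 : ε ≤ 1) :
    unif (resonantSet E ε) ≤ ENNReal.ofReal (3 * √ε) := by
  have hsub : resonantSet E ε ∩ Set.Icc (-1) 1 ⊆ {t | |t ^ 2 - (E ^ 2 - 1)| ≤ 4 * ε} :=
    fun t ⟨ht, ht1⟩ => abs_sq_sub_le_of_mem_resonantSet ht (abs_le.mpr ht1) hε1
  have hsqrt : √(2 * (4 * ε)) ≤ 3 * √ε := by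
    rw [Real.sqrt_le_left (by positivity), mul_pow, Real.sq_sqrt hε0]
    linarith
  calc unif (resonantSet E ε)
      ≤ 2⁻¹ * ENNReal.ofReal (2 * √(2 * (4 * ε))) := by
        rw [unif_apply]
        gcongr
        exact (measure_mono hsub).trans (Real.volume_setOf_abs_sq_sub_le_le _ _)
    _ = ENNReal.ofReal √(2 * (4 * ε)) := by
        rw [ENNReal.ofReal_mul zero_le_two, ENNReal.ofReal_ofNat, ← mul_assoc,
          ENNReal.inv_mul_cancel two_ne_zero ENNReal.ofNat_ne_top, one_mul]
    _ ≤ ENNReal.ofReal (3 * √ε) := ENNReal.ofReal_le_ofReal hsqrt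

section Dist1

variable {d : ℕ}

lemma dist1_triangle (a b c : Fin d → ℤ) : dist1 a c ≤ dist1 a b + dist1 b c := by
  rw [dist1, dist1, dist1, ← sum_add_distrib]
  gcongr with i
  simpa only [sub_add_sub_cancel] using Int.natAbs_add_le (a i - b i) (b i - c i)

lemma dist1_le_of_forall_dist1_eq_one {w : ℕ → Fin d → ℤ} {m : ℕ}
    (hw : ∀ i < m, dist1 (w i) (w (i + 1)) = 1) : dist1 (w 0) (w m) ≤ m := by
  induction m with
  | zero => simp [dist1]
  | succ m ih =>
    have := dist1_triangle (w 0) (w m) (w (m + 1))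
    have := ih fun i hi => hw i (by omega)
    have := hw m (by omega)
    omega

lemma exists_eq_add_single_of_dist1_eq_one {a b : Fin d → ℤ} (h : dist1 a b = 1) :
    ∃ i, ∃ s ∈ ({1, -1} : Finset ℤ), b = a + Pi.single i s := by
  obtain ⟨i, -, hi⟩ := exists_ne_zero_of_sum_ne_zero (h.trans_ne one_ne_zero)
  have hsplit := add_sum_erase univ (fun j => (a j - b j).natAbs) (mem_univ i)
  rw [← dist1, h] at hsplit
  have hrest : ∀ j ∈ univ.erase i, (a j - b j).natAbs = 0 := sum_eq_zero_iff.mp (by omega)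
  refine ⟨i, b i - a i, ?_, funext fun j => ?_⟩
  · have : (a i - b i).natAbs = 1 := by omega
    rcases Int.natAbs_eq_iff.mp this with h1 | h1 <;> simp <;> omega
  · rcases eq_or_ne j i with rfl | hj
    · simp
    · have := hrest j (mem_erase.mpr ⟨hj, mem_univ j⟩)
      simp [hj]
      omega

lemma card_dist1_eq_one_le (Λ : Finset (Fin d → ℤ)) (a : Fin d → ℤ) :
    #{b : Λ | dist1 a b = 1} ≤ 2 * d :=
  calc #{b : Λ | dist1 a b = 1}
      ≤ #((univ ×ˢ {1, -1}).image fun p : Fin d × ℤ => a + Pi.single p.1 p.2) := by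
        refine card_le_card_of_injOn Subtype.val (fun b hb => ?_) Subtype.val_injective.injOn
        obtain ⟨i, s, hs, hb⟩ := exists_eq_add_single_of_dist1_eq_one (mem_filter.mp hb).2
        exact mem_image.mpr ⟨(i, s), mem_product.mpr ⟨mem_univ i, hs⟩, hb.symm⟩
    _ ≤ #(univ ×ˢ ({1, -1} : Finset ℤ)) := card_image_le
    _ = 2 * d := by simp [mul_comm]

end Dist1

section Walks

variable {α : Type*}

def IsWalkIn (R : α → α → Prop) (S : Set α) (x y : α) (m : ℕ) (w : ℕ → α) : Prop :=
  w 0 = x ∧ w m = y ∧ (∀ i ≤ m, w i ∈ S) ∧ ∀ i < m, R (w i) (w (i + 1))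

variable {R : α → α → Prop}

lemma card_walks_le [Fintype α] [DecidableEq α] [DecidableRel R] {D : ℕ}
    (hD : ∀ a, #{b | R a b} ≤ D) (x : α) (m : ℕ) :
    #{w : Fin (m + 1) → α | w 0 = x ∧ ∀ i : Fin m, R (w i.castSucc) (w i.succ)} ≤ D ^ m := by
  induction m with
  | zero =>
    refine card_le_one.mpr fun w hw v hv => funext fun i => ?_
    rw [Fin.fin_one_eq_zero i, (mem_filter.mp hw).2.1, (mem_filter.mp hv).2.1]
  | succ m ih =>
    -- a walk of length `m + 1` is its first `m` steps (`Fin.init`) and a successor of their end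
    refine (card_le_mul_card_image_of_maps_to (f := Fin.init) (n := D)
      (t := {v : Fin (m + 1) → α | v 0 = x ∧ ∀ i : Fin m, R (v i.castSucc) (v i.succ)})
      ?_ ?_).trans ?_
    · intro w hw
      obtain ⟨-, hw0, hwR⟩ := mem_filter.mp hw
      refine mem_filter.mpr ⟨mem_univ _, hw0, fun i => ?_⟩
      simpa only [Fin.init, Fin.succ_castSucc] using hwR i.castSucc
    · intro v _
      refine (card_le_card_of_injOn (fun w => w (Fin.last _)) (t := {b | R (v (Fin.last m)) b})
        ?_ ?_).trans (hD _)
      · intro w hw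
        obtain ⟨hws, rfl⟩ := mem_filter.mp hw
        rw [coe_filter]
        simpa [Fin.init] using (mem_filter.mp hws).2.2 (Fin.last m)
      · intro w hw w' hw' hlast
        rw [← Fin.snoc_init_self w, ← Fin.snoc_init_self w', (mem_filter.mp hw).2,
          (mem_filter.mp hw').2]
        exact congrArg _ hlast
    · rw [pow_succ']
      exact Nat.mul_le_mul_left D ih

variable {S : Set α} {x y : α}

lemma IsWalkIn.shortcut {m : ℕ} {w : ℕ → α} (hw : IsWalkIn R S x y m w) {i j : ℕ}
    (hij : i < j) (hjm : j ≤ m) (hwij : w i = w j) :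
    IsWalkIn R S x y (m - (j - i)) (fun n => if n ≤ i then w n else w (n + (j - i))) := by
  obtain ⟨h0, hm, hS, hR⟩ := hw
  refine ⟨by simpa using h0, ?_, fun n hn => ?_, fun n hn => ?_⟩
  · dsimp only
    split_ifs with h
    · rw [show m - (j - i) = i by omega, hwij, show j = m by omega, hm]
    · rw [show m - (j - i) + (j - i) = m by omega, hm]
  · dsimp only
    split_ifs
    · exact hS n (by omega)
    · exact hS _ (by omega)
  · dsimp only
    split_ifs with h1 h2 h2
    · exact hR n (by omega)
    · rw [show n = i by omega, hwij, show i + 1 + (j - i) = j + 1 by omega]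
      exact hR j (by omega)
    · omega
    · rw [show n + 1 + (j - i) = n + (j - i) + 1 by omega]
      exact hR _ (by omega)

lemma IsWalkIn.exists_injOn (h : ∃ m w, IsWalkIn R S x y m w) :
    ∃ m w, IsWalkIn R S x y m w ∧ Set.InjOn w (Set.Iic m) := by
  classical
  obtain ⟨w, hw⟩ := Nat.find_spec h
  refine ⟨Nat.find h, w, hw, fun i (hi : i ≤ _) j (hj : j ≤ _) hwij => ?_⟩
  by_contra hne
  rcases Nat.lt_or_gt_of_ne hne with hij | hji
  · exact Nat.find_min h (by omega) ⟨_, hw.shortcut hij hj hwij⟩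
  · exact Nat.find_min h (by omega) ⟨_, hw.shortcut hji hi hwij.symm⟩

end Walks

lemma MeasureTheory.Measure.pi_setOf_forall_comp_mem {ι β : Type*} [Fintype ι]
    [MeasurableSpace β] (ν : Measure β) [IsProbabilityMeasure ν] (A : Set β) {n : ℕ}
    {v : Fin n → ι} (hv : v.Injective) :
    Measure.pi (fun _ : ι => ν) {u | ∀ i, u (v i) ∈ A} = ν A ^ n := by
  classical
  have hcyl : {u : ι → β | ∀ i, u (v i) ∈ A} = (↑(univ.image v) : Set ι).pi fun _ => A := by
    ext u
    simp
  rw [hcyl, Measure.pi_pi_finset, prod_const, card_image_of_injective _ hv, card_univ,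
    Fintype.card_fin]

theorem MeasureTheory.Measure.pi_setOf_exists_isWalkIn_le {ι β : Type*} [Fintype ι]
    [MeasurableSpace β] (ν : Measure β) [IsProbabilityMeasure ν] (A : Set β)
    (R : ι → ι → Prop) [DecidableRel R] {D : ℕ} (hD : ∀ a, #{b | R a b} ≤ D) {x y : ι} {k : ℕ}
    (hk : ∀ (m : ℕ) (w : ℕ → ι), w 0 = x → w m = y → (∀ i < m, R (w i) (w (i + 1))) → k ≤ m) :
    Measure.pi (fun _ : ι => ν) {u | ∃ m w, IsWalkIn R {z | u z ∈ A} x y m w} ≤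
      ∑' n, (D : ℝ≥0∞) ^ (n + k) * ν A ^ (n + k + 1) := by
  classical
  let walks (m : ℕ) : Finset (Fin (m + 1) → ι) :=
    {v | (v 0 = x ∧ ∀ i : Fin m, R (v i.castSucc) (v i.succ)) ∧ v.Injective}
  have hcover : {u : ι → β | ∃ m w, IsWalkIn R {z | u z ∈ A} x y m w} ⊆
      ⋃ n, ⋃ v ∈ walks (n + k), {u | ∀ i, u (v i) ∈ A} := by
    intro u hu
    obtain ⟨m, w, hw, hinj⟩ := IsWalkIn.exists_injOn hu
    obtain ⟨n, rfl⟩ : ∃ n, m = n + k := ⟨m - k, by have := hk m w hw.1 hw.2.1 hw.2.2.2; omega⟩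
    simp only [Set.mem_iUnion]
    refine ⟨n, fun i => w i, mem_filter.mpr ⟨mem_univ _, ⟨hw.1, fun i => hw.2.2.2 i i.isLt⟩,
      fun i j hij => Fin.ext (hinj (Nat.lt_succ_iff.mp i.isLt) (Nat.lt_succ_iff.mp j.isLt) hij)⟩,
      fun i => hw.2.2.1 i (Nat.lt_succ_iff.mp i.isLt)⟩
  calc Measure.pi (fun _ : ι => ν) {u | ∃ m w, IsWalkIn R {z | u z ∈ A} x y m w}
      ≤ ∑' n, ∑ v ∈ walks (n + k), Measure.pi (fun _ : ι => ν) {u | ∀ i, u (v i) ∈ A} :=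
        (measure_mono hcover).trans <| (measure_iUnion_le _).trans <|
          ENNReal.tsum_le_tsum fun n => measure_biUnion_finset_le _ _
    _ = ∑' n, #(walks (n + k)) * ν A ^ (n + k + 1) := by
        refine tsum_congr fun n => ?_
        rw [Finset.sum_congr rfl fun v hv => Measure.pi_setOf_forall_comp_mem ν A (mem_filter.mp hv).2.2,
          sum_const, nsmul_eq_mul]
    _ ≤ ∑' n, (D : ℝ≥0∞) ^ (n + k) * ν A ^ (n + k + 1) := by
        gcongr with n
        exact_mod_cast (card_le_card (monotone_filter_right _ fun _ _ => And.left)).trans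
          (card_walks_le hD x (n + k))

lemma ENNReal.tsum_pow_add_le {r : ℝ≥0∞} (hr : r ≤ 2⁻¹) (k : ℕ) :
    ∑' n, r ^ (n + k) ≤ 2 * r ^ k := by
  simp_rw [pow_add]
  rw [ENNReal.tsum_mul_right, ENNReal.tsum_geometric]
  gcongr
  calc (1 - r)⁻¹ ≤ (1 - 2⁻¹)⁻¹ := by gcongr
    _ = 2 := by rw [ENNReal.one_sub_inv_two, inv_inv]

lemma ENNReal.tsum_pow_mul_pow_le {D : ℕ} {p : ℝ≥0∞} {a : ℝ} (ha : 0 ≤ a)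
    (hp : p ≤ ENNReal.ofReal a) (hDa : D * a ≤ 2⁻¹) (k : ℕ) :
    ∑' n, (D : ℝ≥0∞) ^ (n + k) * p ^ (n + k + 1) ≤ ENNReal.ofReal (2 * a * (D * a) ^ k) := by
  have hr : (D : ℝ≥0∞) * ENNReal.ofReal a = ENNReal.ofReal (D * a) := by
    rw [ENNReal.ofReal_mul (Nat.cast_nonneg D), ENNReal.ofReal_natCast]
  calc ∑' n, (D : ℝ≥0∞) ^ (n + k) * p ^ (n + k + 1)
      ≤ ∑' n, ENNReal.ofReal a * ENNReal.ofReal (D * a) ^ (n + k) := by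
        refine ENNReal.tsum_le_tsum fun n => ?_
        rw [← hr, mul_pow, pow_succ]
        calc (D : ℝ≥0∞) ^ (n + k) * (p ^ (n + k) * p)
            ≤ (D : ℝ≥0∞) ^ (n + k) * (ENNReal.ofReal a ^ (n + k) * ENNReal.ofReal a) := by
              gcongr
          _ = _ := by ring
    _ = ENNReal.ofReal a * ∑' n, ENNReal.ofReal (D * a) ^ (n + k) := ENNReal.tsum_mul_left
    _ ≤ ENNReal.ofReal a * (2 * ENNReal.ofReal (D * a) ^ k) := by
        gcongr
        refine ENNReal.tsum_pow_add_le ?_ k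
        rw [← ENNReal.ofReal_ofNat 2, ← ENNReal.ofReal_inv_of_pos two_pos]
        exact ENNReal.ofReal_le_ofReal hDa
    _ = ENNReal.ofReal (2 * a * (D * a) ^ k) := by
        rw [ENNReal.ofReal_mul (by positivity : 0 ≤ 2 * a), ENNReal.ofReal_mul zero_le_two,
          ENNReal.ofReal_pow (by positivity), ENNReal.ofReal_ofNat]
        ring

theorem resonant_component_probability_general (d : ℕ) (hd : 1 ≤ d)
    (Λ : Finset (Fin d → ℤ))
    (E ε : ℝ) (hε0 : 0 < ε) (hε1 : 144 * (d : ℝ) ^ 2 * ε ≤ 1)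
    (x y : Fin d → ℤ) (hx : x ∈ Λ) (hy : y ∈ Λ) :
    unifPi {z // z ∈ Λ}
        {u : {z // z ∈ Λ} → ℝ |
          ∃ (m : ℕ) (w : ℕ → {z // z ∈ Λ}),
            w 0 = ⟨x, hx⟩ ∧ w m = ⟨y, hy⟩ ∧
            (∀ i ≤ m, min |Real.sqrt (u (w i) ^ 2 + 1) - E|
                |Real.sqrt (u (w i) ^ 2 + 1) + E| ≤ ε) ∧
            (∀ i < m, dist1 (w i : Fin d → ℤ) (w (i + 1) : Fin d → ℤ) = 1)} ≤
      ENNReal.ofReal ((12 * d * Real.sqrt ε) ^ (dist1 x y + 1)) := by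
  have hd1 : (1 : ℝ) ≤ d := by exact_mod_cast hd
  have hε : ε ≤ 1 := by nlinarith
  have hratio : ((2 * d : ℕ) : ℝ) * (3 * √ε) ≤ 2⁻¹ := by
    push_cast
    nlinarith [Real.sq_sqrt hε0.le, Real.sqrt_nonneg ε]
  calc _ ≤ ∑' n, ((2 * d : ℕ) : ℝ≥0∞) ^ (n + dist1 x y) *
          unif (resonantSet E ε) ^ (n + dist1 x y + 1) :=
        Measure.pi_setOf_exists_isWalkIn_le unif _ (fun a b : Λ => dist1 a.val b = 1)
          (x := ⟨x, hx⟩) (y := ⟨y, hy⟩) (fun a => card_dist1_eq_one_le Λ a) fun m w h0 hm hw => by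
            simpa [h0, hm] using dist1_le_of_forall_dist1_eq_one (w := fun i => (w i).val) hw
    _ ≤ ENNReal.ofReal (2 * (3 * √ε) * (((2 * d : ℕ) : ℝ) * (3 * √ε)) ^ dist1 x y) :=
        ENNReal.tsum_pow_mul_pow_le (by positivity) (unif_resonantSet_le E hε0.le hε) hratio _
    _ ≤ ENNReal.ofReal ((12 * d * √ε) ^ (dist1 x y + 1)) := by
        refine ENNReal.ofReal_le_ofReal ?_
        rw [pow_succ']
        push_cast
        gcongr ?_ * ?_ ^ _ <;> nlinarith [Real.sqrt_nonneg ε]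

/-- for `144·d²·ε ≤ 1`, the probability that `x` and `y` lie in the same
nearest-neighbor connected component of the set of `ε`-resonant positions (those with
`min(|√(u_x²+1) − E|, |√(u_x²+1) + E|) ≤ ε`) is at most `(12d√ε)^{|x−y|+1}`. -/
theorem resonant_component_probability (d : ℕ) (hd : 1 ≤ d)
    (Λ : Finset (Fin d → ℤ)) (hrect : ∃ a b, Λ = Finset.Icc a b)
    (E ε : ℝ) (hε0 : 0 < ε) (hε1 : 144 * (d : ℝ) ^ 2 * ε ≤ 1)
    (x y : Fin d → ℤ) (hx : x ∈ Λ) (hy : y ∈ Λ) :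
    unifPi {z // z ∈ Λ}
        {u : {z // z ∈ Λ} → ℝ |
          ∃ (m : ℕ) (w : ℕ → {z // z ∈ Λ}),
            w 0 = ⟨x, hx⟩ ∧ w m = ⟨y, hy⟩ ∧
            (∀ i ≤ m, min |Real.sqrt (u (w i) ^ 2 + 1) - E|
                |Real.sqrt (u (w i) ^ 2 + 1) + E| ≤ ε) ∧
            (∀ i < m, dist1 (w i : Fin d → ℤ) (w (i + 1) : Fin d → ℤ) = 1)} ≤
      ENNReal.ofReal ((12 * d * Real.sqrt ε) ^ (dist1 x y + 1)) :=
  resonant_component_probability_general d hd Λ E ε hε0 hε1 x y hx hy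
end

section
/- For every γ > 0 and every finite rectangle Λ ⊂ ℤ^d, almost surely (with respect to the i.i.d. uniform variables (u_x)_{x∈Λ} on [−1,1]) the matrix H(u) has 2|Λ| pairwise distinct eigenvalues, i.e., its spectrum is simple. -/
/-!
A real symmetric matrix has simple spectrum iff the Hankel determinant
`det (tr A^(i+j))_{i,j < n} = ∏_{i<j} (λᵢ - λⱼ)²` of its power traces is nonzero. For `H(u)`
this determinant is a polynomial `P` in the variables `u`, so it suffices that `P ≠ 0`: the zero
set of a nonzero polynomial is null for any product of atomless measures (Fubini, inducting on
the number of variables). To see `P ≠ 0`, take `u = c • w` with `w` positive and injective: then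
`H(u) = c • (diag(±w) + c⁻¹ • H(0))`, and for `c` large this is a small perturbation of the
diagonal matrix `diag(±w)`, whose entries are pairwise distinct.
-/

open MeasureTheory

/-- The random block Hamiltonian: diagonal 2×2 block `[[u_x,1],[1,-u_x]]` at each
position `x ∈ Λ`, and block `γ·I₂` between nearest-neighbor positions. -/
noncomputable def Ham (d : ℕ) (γ : ℝ) (Λ : Finset (Fin d → ℤ)) (u : {x // x ∈ Λ} → ℝ) :
    Matrix ({x // x ∈ Λ} × Fin 2) ({x // x ∈ Λ} × Fin 2) ℝ := fun s t =>
  if s.1 = t.1 then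
    (if s.2 = t.2 then (if s.2 = 0 then u s.1 else -u s.1) else 1)
  else if dist1 (s.1 : Fin d → ℤ) (t.1 : Fin d → ℤ) = 1 then
    (if s.2 = t.2 then γ else 0)
  else 0

open Matrix

namespace MvPolynomial

theorem ae_eval_ne_zero_fin : ∀ {n : ℕ} (μ : Fin n → Measure ℝ) [∀ i, SigmaFinite (μ i)]
    [∀ i, NullSingletonClass (μ i)] {P : MvPolynomial (Fin n) ℝ}, P ≠ 0 →
    ∀ᵐ u ∂Measure.pi μ, eval u P ≠ 0
  | 0, μ, _, _, P, hP => by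
    refine Filter.Eventually.of_forall fun u => ?_
    rwa [eq_C_of_isEmpty P, eval_C, ne_eq, ← C_inj (σ := Fin 0), ← eq_C_of_isEmpty, map_zero]
  | n + 1, μ, _, _, P, hP => by
    set Q := finSuccEquiv ℝ n P
    have hQ : Q.leadingCoeff ≠ 0 := by simpa [Q] using hP
    have hsections : ∀ᵐ v ∂Measure.pi (fun j => μ (Fin.succAbove 0 j)),
        ∀ᵐ x ∂μ 0, eval (Fin.cons x v) P ≠ 0 := by
      filter_upwards [ae_eval_ne_zero_fin _ hQ] with v hv
      have hQv : Q.map (eval v) ≠ 0 := by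
        intro h
        apply hv
        simpa [Polynomial.coeff_map] using congrArg (Polynomial.coeff · Q.natDegree) h
      simp_rw [eval_eq_eval_mv_eval']
      exact (Polynomial.finite_setOfPred_isRoot hQv).countable.ae_notMem _
    have hmeas : MeasurableSet {z : ℝ × (Fin n → ℝ) | eval (Fin.cons z.1 z.2) P ≠ 0} :=
      ((continuous_eval P).measurable.comp (by fun_prop)) (measurableSet_singleton 0).compl
    have hprod := (Measure.ae_prod_iff_ae_ae hmeas).2 ((Measure.ae_ae_comm hmeas).2 hsections)
    filter_upwards [(measurePreserving_piFinSuccAbove μ 0).quasiMeasurePreserving.ae hprod]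
      with u hu
    simpa using hu

theorem ae_eval_ne_zero {ι : Type*} [Fintype ι] (μ : ι → Measure ℝ) [∀ i, SigmaFinite (μ i)]
    [∀ i, NullSingletonClass (μ i)] {P : MvPolynomial ι ℝ} (hP : P ≠ 0) :
    ∀ᵐ u ∂Measure.pi μ, eval u P ≠ 0 := by
  let e := Fintype.equivFin ι
  have hP' : rename e P ≠ 0 := (rename_injective _ e.injective).ne_iff' (map_zero _) |>.2 hP
  filter_upwards [(measurePreserving_piCongrLeft μ e.symm).symm.quasiMeasurePreserving.ae
    (ae_eval_ne_zero_fin _ hP')] with u hu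
  simpa [eval_rename, Function.comp_def, MeasurableEquiv.piCongrLeft,
    Equiv.piCongrLeft_symm_apply] using hu

end MvPolynomial

namespace Matrix

variable {ι R : Type*} [Fintype ι] [DecidableEq ι]

/-- The Hankel determinant of the power traces `tr Aᵏ = ∑ λᵢᵏ`, i.e. `∏_{i<j} (λᵢ - λⱼ)²`, the
discriminant of the characteristic polynomial; unlike the eigenvalues, it is a polynomial in the
entries of `A`. -/
noncomputable def traceDiscr [CommRing R] (A : Matrix ι ι R) : R :=
  (of fun i j : Fin (Fintype.card ι) => trace (A ^ (i + j : ℕ))).det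

theorem traceDiscr_map {S : Type*} [CommRing R] [CommRing S] (f : R →+* S)
    (A : Matrix ι ι R) : (A.map f).traceDiscr = f A.traceDiscr := by
  rw [traceDiscr, traceDiscr, RingHom.map_det]
  congr 1
  ext i j
  rw [RingHom.mapMatrix_apply, map_apply, of_apply, of_apply, ← Matrix.map_pow,
    AddMonoidHom.map_trace]

theorem traceDiscr_eq_det_vandermonde_sq [CommRing R] {A : Matrix ι ι R} {v : ι → R}
    (h : ∀ k : ℕ, trace (A ^ k) = ∑ i, v i ^ k) :
    A.traceDiscr = (vandermonde (v ∘ (Fintype.equivFin ι).symm)).det ^ 2 := by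
  set V := vandermonde (v ∘ (Fintype.equivFin ι).symm)
  have hHankel : (of fun i j : Fin (Fintype.card ι) => trace (A ^ (i + j : ℕ))) = Vᵀ * V := by
    ext i j
    rw [of_apply, h, ← (Fintype.equivFin ι).symm.sum_comp]
    simp [V, mul_apply, pow_add]
  rw [traceDiscr, hHankel, det_mul, det_transpose, sq]

theorem traceDiscr_ne_zero_iff [CommRing R] [IsDomain R] {A : Matrix ι ι R} {v : ι → R}
    (h : ∀ k : ℕ, trace (A ^ k) = ∑ i, v i ^ k) :
    A.traceDiscr ≠ 0 ↔ Function.Injective v := by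
  rw [traceDiscr_eq_det_vandermonde_sq h, pow_ne_zero_iff two_ne_zero,
    det_vandermonde_ne_zero_iff, Equiv.injective_comp]

theorem trace_diagonal_pow [CommRing R] (v : ι → R) (k : ℕ) :
    trace (diagonal v ^ k) = ∑ i, v i ^ k := by
  simp [diagonal_pow, trace_diagonal]

theorem traceDiscr_smul [CommRing R] (c : R) (A : Matrix ι ι R) :
    (c • A).traceDiscr = (∏ i : Fin (Fintype.card ι), c ^ (i : ℕ)) ^ 2 * A.traceDiscr := by
  let C := diagonal fun i : Fin (Fintype.card ι) => c ^ (i : ℕ)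
  have hHankel : (of fun i j : Fin (Fintype.card ι) => trace ((c • A) ^ (i + j : ℕ))) =
      C * (of fun i j : Fin (Fintype.card ι) => trace (A ^ (i + j : ℕ))) * C := by
    ext i j
    rw [mul_diagonal, diagonal_mul, of_apply, of_apply, _root_.smul_pow, trace_smul,
      smul_eq_mul, pow_add]
    ring
  rw [traceDiscr, hHankel, det_mul, det_mul, det_diagonal, traceDiscr]
  ring

theorem continuous_traceDiscr [CommRing R] [TopologicalSpace R] [IsTopologicalRing R] :
    Continuous (traceDiscr : Matrix ι ι R → R) :=
  (continuous_id.matrix_det).comp <| continuous_matrix fun _ _ =>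
    (continuous_id.pow _).matrix_trace

theorem exists_traceDiscr_smul_add_ne_zero {𝕜 : Type*} [NontriviallyNormedField 𝕜]
    {D : Matrix ι ι 𝕜} (hD : D.traceDiscr ≠ 0) (B : Matrix ι ι 𝕜) :
    ∃ c : 𝕜, (c • D + B).traceDiscr ≠ 0 := by
  have hcont : Continuous fun s : 𝕜 => (D + s • B).traceDiscr :=
    continuous_traceDiscr.comp (continuous_const.add (continuous_id.smul continuous_const))
  have hnear : ∀ᶠ s in nhdsWithin (0 : 𝕜) {0}ᶜ, (D + s • B).traceDiscr ≠ 0 ∧ s ≠ 0 :=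
    (hcont.continuousAt.eventually_ne (by simpa using hD)).filter_mono nhdsWithin_le_nhds
      |>.and self_mem_nhdsWithin
  obtain ⟨s, hs, hs0⟩ := hnear.exists
  have hrescale : s⁻¹ • D + B = s⁻¹ • (D + s • B) := by
    rw [smul_add, smul_smul, inv_mul_cancel₀ hs0, one_smul]
  refine ⟨s⁻¹, ?_⟩
  rw [hrescale, traceDiscr_smul]
  exact mul_ne_zero (pow_ne_zero _ (Finset.prod_ne_zero_iff.2 fun _ _ =>
    pow_ne_zero _ (inv_ne_zero hs0))) hs

theorem IsHermitian.trace_pow_eq_sum_eigenvalues_pow {𝕜 : Type*} [RCLike 𝕜]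
    {A : Matrix ι ι 𝕜} (hA : A.IsHermitian) (k : ℕ) :
    trace (A ^ k) = ∑ i, (hA.eigenvalues i : 𝕜) ^ k := by
  conv_lhs => rw [hA.spectral_theorem, ← map_pow, Unitary.conjStarAlgAut_apply, trace_mul_cycle,
    Unitary.coe_star_mul_self, one_mul, diagonal_pow, trace_diagonal]
  simp

theorem IsHermitian.card_roots_charpoly_of_traceDiscr_ne_zero {𝕜 : Type*} [RCLike 𝕜]
    {A : Matrix ι ι 𝕜} (hA : A.IsHermitian) (hA₀ : A.traceDiscr ≠ 0) :
    A.charpoly.roots.toFinset.card = Fintype.card ι := by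
  have hinj : Function.Injective (RCLike.ofReal ∘ hA.eigenvalues : ι → 𝕜) :=
    (traceDiscr_ne_zero_iff hA.trace_pow_eq_sum_eigenvalues_pow).1 hA₀
  rw [hA.roots_charpoly_eq_eigenvalues, Multiset.toFinset_map, Finset.val_toFinset,
    Finset.card_image_of_injective _ hinj, Finset.card_univ]

end Matrix

instance : NullSingletonClass unif :=
  ⟨fun x => by rw [unif, Measure.smul_apply, measure_singleton, smul_zero]⟩

section Onsite

variable {κ R : Type*}

/-- The diagonal `(u_x, -u_x)` of the blocks `h_x`. -/
def onsite [Neg R] (u : κ → R) : κ × Fin 2 → R := fun s => if s.2 = 0 then u s.1 else -u s.1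

theorem onsite_smul [Ring R] (c : R) (u : κ → R) : onsite (c • u) = c • onsite u := by
  ext s
  by_cases h : s.2 = 0 <;> simp [onsite, h]

theorem onsite_injective [CommRing R] [LinearOrder R] [IsStrictOrderedRing R] {u : κ → R}
    (hpos : ∀ x, 0 < u x) (hinj : Function.Injective u) : Function.Injective (onsite u) := by
  rintro ⟨x, i⟩ ⟨y, j⟩ h
  have hx := hpos x
  have hy := hpos y
  fin_cases i <;> fin_cases j <;> simp [onsite] at h ⊢
  · exact hinj h
  · linarith
  · linarith
  · exact hinj h

end Onsite

theorem dist1_comm {d : ℕ} (x y : Fin d → ℤ) : dist1 x y = dist1 y x :=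
  Finset.sum_congr rfl fun _ _ => by rw [← Int.natAbs_neg, neg_sub]

section Hamiltonian

variable (d : ℕ) (γ : ℝ) (Λ : Finset (Fin d → ℤ))

theorem ham_isHermitian (u : {x // x ∈ Λ} → ℝ) : (Ham d γ Λ u).IsHermitian := by
  refine IsHermitian.ext fun s t => ?_
  rw [star_trivial, Ham, Ham, dist1_comm]
  by_cases h1 : s.1 = t.1 <;> by_cases h2 : s.2 = t.2 <;> simp [h1, h2, eq_comm]

theorem ham_eq_diagonal_add (u : {x // x ∈ Λ} → ℝ) :
    Ham d γ Λ u = diagonal (onsite u) + Ham d γ Λ 0 := by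
  ext s t
  by_cases hst : s = t
  · subst hst
    simp [Ham, onsite]
  · rw [Matrix.add_apply, diagonal_apply_ne _ hst, zero_add]
    by_cases h1 : s.1 = t.1
    · have h2 : s.2 ≠ t.2 := fun h => hst (Prod.ext h1 h)
      simp [Ham, h1, h2]
    · simp [Ham, h1]

/-- `H(u)` with the `u_x` replaced by indeterminates. -/
noncomputable def hamPoly :
    Matrix ({x // x ∈ Λ} × Fin 2) ({x // x ∈ Λ} × Fin 2) (MvPolynomial {x // x ∈ Λ} ℝ) :=
  diagonal (onsite MvPolynomial.X) + (Ham d γ Λ 0).map MvPolynomial.C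

theorem hamPoly_map_eval (u : {x // x ∈ Λ} → ℝ) :
    (hamPoly d γ Λ).map (MvPolynomial.eval u) = Ham d γ Λ u := by
  rw [hamPoly, Matrix.map_add _ (map_add _), diagonal_map (map_zero _), Matrix.map_map,
    ham_eq_diagonal_add d γ Λ u]
  congr 1
  · congr 1
    ext s
    by_cases h : s.2 = 0 <;> simp [onsite, h]
  · ext s t
    simp

theorem traceDiscr_hamPoly_ne_zero : (hamPoly d γ Λ).traceDiscr ≠ 0 := by
  let w : {x // x ∈ Λ} → ℝ := fun x => Real.exp (Fintype.equivFin _ x : ℕ)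
  have hw : Function.Injective (onsite w) :=
    onsite_injective (fun _ => Real.exp_pos _) <| Real.exp_injective.comp <|
      Nat.cast_injective.comp <| Fin.val_injective.comp (Fintype.equivFin _).injective
  have hD : (diagonal (onsite w)).traceDiscr ≠ 0 :=
    (traceDiscr_ne_zero_iff (trace_diagonal_pow _)).2 hw
  obtain ⟨c, hc⟩ := exists_traceDiscr_smul_add_ne_zero hD (Ham d γ Λ 0)
  rw [← diagonal_smul, ← onsite_smul, ← ham_eq_diagonal_add, ← hamPoly_map_eval,
    traceDiscr_map] at hc
  exact fun h => hc (by rw [h, map_zero])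

end Hamiltonian

theorem spectrum_simple_general (d : ℕ) (γ : ℝ) (Λ : Finset (Fin d → ℤ)) :
    ∀ᵐ u ∂(unifPi {x // x ∈ Λ}),
      (Ham d γ Λ u).charpoly.roots.toFinset.card = 2 * Λ.card := by
  filter_upwards [MvPolynomial.ae_eval_ne_zero _ (traceDiscr_hamPoly_ne_zero d γ Λ)] with u hu
  rw [← traceDiscr_map, hamPoly_map_eval] at hu
  rw [(ham_isHermitian d γ Λ u).card_roots_charpoly_of_traceDiscr_ne_zero hu, Fintype.card_prod,
    Fintype.card_coe, Fintype.card_fin, mul_comm]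

/-- almost surely, `H(u)` has `2|Λ|` pairwise distinct (real) eigenvalues,
i.e. its characteristic polynomial has `2|Λ|` distinct roots: the spectrum is simple. -/
theorem spectrum_simple (d : ℕ) (hd : 1 ≤ d) (γ : ℝ) (hγ : 0 < γ)
    (Λ : Finset (Fin d → ℤ)) (hrect : ∃ a b, Λ = Finset.Icc a b) :
    ∀ᵐ u ∂(unifPi {x // x ∈ Λ}),
      (Ham d γ Λ u).charpoly.roots.toFinset.card = 2 * Λ.card :=
  spectrum_simple_general d γ Λ
end

section
/- There exists a constant c_d > 0 depending only on the dimension d with the following property. Let E ∈ ℝ, ε > 0, γ > 0 with 2·c_d·γ ≤ ε, let u ∈ [−1,1]^Λ, and let Λ' ⊆ Λ be a set of positions such that every x ∈ Λ' satisfies both |√(u_x²+1) − E| ≥ ε and |√(u_x²+1) + E| ≥ ε; set R = Λ ∖ Λ'. Let D be the restriction of H(u) to the sites Λ' × {1,2} and let C be the block of H(u) with rows indexed by Λ' × {1,2} and columns by R × {1,2}. Then for every λ ∈ ℝ with |λ − E| ≤ ε/2, every position x ∈ Λ', and every position y ∈ R, the 2×2 block of (D − λ·I)⁻¹C between x and y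 has operator norm at most (c_d·γ/ε)^{max(|x−y|, 1)}. -/
open Matrix

/-- The 2×2 block of a site-indexed matrix between positions `x` and `y`. -/
def blk {α β : Type*} (M : Matrix (α × Fin 2) (β × Fin 2) ℝ) (x : α) (y : β) :
    Matrix (Fin 2) (Fin 2) ℝ := fun i j => M (x, i) (y, j)

/-- Restriction `D` of `H(u)` to the sites over `Λ' ⊆ Λ`. -/
noncomputable def Dmat (d : ℕ) (γ : ℝ) (Λ Λ' : Finset (Fin d → ℤ)) (hsub : Λ' ⊆ Λ)
    (u : {x // x ∈ Λ} → ℝ) :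
    Matrix ({x // x ∈ Λ'} × Fin 2) ({x // x ∈ Λ'} × Fin 2) ℝ :=
  (Ham d γ Λ u).submatrix
    (fun s => ((⟨s.1.1, hsub s.1.2⟩ : {x // x ∈ Λ}), s.2))
    (fun s => ((⟨s.1.1, hsub s.1.2⟩ : {x // x ∈ Λ}), s.2))

/-- The block `C` of `H(u)` with rows indexed by the sites over `Λ'` and columns by
the sites over `R = Λ \ Λ'`. -/
noncomputable def Cmat (d : ℕ) (γ : ℝ) (Λ Λ' : Finset (Fin d → ℤ)) (hsub : Λ' ⊆ Λ)
    (u : {x // x ∈ Λ} → ℝ) :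
    Matrix ({x // x ∈ Λ'} × Fin 2) ({x // x ∈ Λ \ Λ'} × Fin 2) ℝ :=
  (Ham d γ Λ u).submatrix
    (fun s => ((⟨s.1.1, hsub s.1.2⟩ : {x // x ∈ Λ}), s.2))
    (fun s => ((⟨s.1.1, (Finset.mem_sdiff.mp s.1.2).1⟩ : {x // x ∈ Λ}), s.2))

/-!
Write `D - λ` as the block-diagonal part with blocks `h_x - λ` plus `γ` times the adjacency of `Λ'`.
Since `h_x² = (u_x² + 1) • 1`, the symmetric block `h_x` has eigenvalues `±√(u_x² + 1)`, so
nonresonance and `|λ - E| ≤ ε/2` give `‖(h_x - λ) v‖ ≥ (ε/2) ‖v‖`. Reading `(D - λ) X = C` block-row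
by block-row, `f x = ‖X_{xy}‖` therefore satisfies `f x ≤ κ [|x - y| = 1] + κ ∑_{x' ~ x} f x'` with
`κ = 2γ/ε`, the sum running over the at most `2d` neighbours of `x` in `Λ'`. At a maximiser of
`f x / ρ ^ max (|x - y|) 1`, with `ρ = 8dγ/ε ≤ 1`, this inequality forces the maximal ratio to be at
most `1`: a neighbour of `x` is at most one step closer to `y`, so it loses at most one factor `ρ`,
which the prefactor `2d κ ≤ ρ/2` pays for.
-/

open scoped Matrix.Norms.L2Operator

lemma le_pow_of_le_sum_neighbors {α : Type*} [Fintype α] (N : α → Finset α) (ℓ : α → ℕ)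
    {n : ℕ} {κ ρ : ℝ} (hκ : 0 ≤ κ) (hρ₀ : 0 < ρ) (hρ₁ : ρ ≤ 1) (hκρ : 2 * κ ≤ ρ)
    (hnκρ : 2 * n * κ ≤ ρ) (hN : ∀ x, (N x).card ≤ n) (hℓ : ∀ x, ∀ x' ∈ N x, ℓ x ≤ ℓ x' + 1)
    {f : α → ℝ} (hf₀ : ∀ x, 0 ≤ f x)
    (hf : ∀ x, f x ≤ (if ℓ x = 1 then κ else 0) + κ * ∑ x' ∈ N x, f x') (x : α) :
    f x ≤ ρ ^ max (ℓ x) 1 := by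
  set m := fun x => max (ℓ x) 1
  have : Nonempty α := ⟨x⟩
  obtain ⟨x₀, hx₀⟩ := Finite.exists_max fun x => f x / ρ ^ m x
  set S := f x₀ / ρ ^ m x₀
  have hfS : ∀ x, f x ≤ S * ρ ^ m x := fun x =>
    (div_le_iff₀ (by positivity)).1 (hx₀ x)
  have hS₀ : 0 ≤ S := div_nonneg (hf₀ x₀) (by positivity)
  have hneighbor : ∀ x' ∈ N x₀, ρ * f x' ≤ S * ρ ^ m x₀ := fun x' hx' =>
    calc ρ * f x' ≤ ρ * (S * ρ ^ m x') := by gcongr; exact hfS x'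
      _ = S * ρ ^ (m x' + 1) := by ring
      _ ≤ S * ρ ^ m x₀ := mul_le_mul_of_nonneg_left
          (pow_le_pow_of_le_one hρ₀.le hρ₁ (by have := hℓ x₀ x' hx'; simp only [m]; omega)) hS₀
  have hsource : ρ * (if ℓ x₀ = 1 then κ else 0) ≤ κ * ρ ^ m x₀ := by
    split_ifs with h
    · simp [m, h, mul_comm]
    · simp only [mul_zero]; positivity
  have hS : S ≤ 1 := by
    have key : ρ * S * ρ ^ m x₀ ≤ (κ + n * κ * S) * ρ ^ m x₀ :=
      calc ρ * S * ρ ^ m x₀ = ρ * f x₀ := by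
            rw [mul_assoc, div_mul_cancel₀ _ (by positivity)]
        _ ≤ ρ * (if ℓ x₀ = 1 then κ else 0) + κ * ∑ x' ∈ N x₀, ρ * f x' := by
            rw [← Finset.mul_sum, mul_left_comm, ← mul_add]; gcongr; exact hf x₀
        _ ≤ κ * ρ ^ m x₀ + κ * ∑ x' ∈ N x₀, S * ρ ^ m x₀ := by
            exact add_le_add hsource (mul_le_mul_of_nonneg_left
              (Finset.sum_le_sum hneighbor) hκ)
        _ ≤ (κ + n * κ * S) * ρ ^ m x₀ := by
            rw [Finset.sum_const, nsmul_eq_mul]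
            have : ((N x₀).card : ℝ) ≤ n := by exact_mod_cast hN x₀
            have := mul_le_mul_of_nonneg_right this (by positivity : 0 ≤ κ * (S * ρ ^ m x₀))
            linarith
    have := le_of_mul_le_mul_right key (by positivity)
    nlinarith
  calc f x ≤ S * ρ ^ m x := hfS x
    _ ≤ ρ ^ m x := mul_le_of_le_one_left (by positivity) hS

lemma opNorm_eq_norm {m n : Type*} [Fintype m] [Fintype n] [DecidableEq n] (M : Matrix m n ℝ) :
    opNorm M = ‖M‖ :=
  rfl

def siteBlock (w : ℝ) : Matrix (Fin 2) (Fin 2) ℝ := !![w, 1; 1, -w]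

/-- For `v = (a, b)` the right side is `‖(h - λ) v‖² = (s² + λ²) ‖v‖² - 2λ ⟪h v, v⟫`, where
`h = siteBlock w`, `s = √(w² + 1)` and `|⟪h v, v⟫| ≤ s ‖v‖²`. -/
lemma sq_sqrt_sub_abs_mul_le (w lam a b : ℝ) :
    (√(w ^ 2 + 1) - |lam|) ^ 2 * (a ^ 2 + b ^ 2) ≤
      ((w - lam) * a + b) ^ 2 + (a - (w + lam) * b) ^ 2 := by
  set s := √(w ^ 2 + 1)
  have hs : s ^ 2 = w ^ 2 + 1 := Real.sq_sqrt (by positivity)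
  have hQ : |w * (a ^ 2 - b ^ 2) + 2 * a * b| ≤ s * (a ^ 2 + b ^ 2) := by
    refine abs_le_of_sq_le_sq ?_ (by positivity)
    nlinarith [sq_nonneg (2 * w * a * b - (a ^ 2 - b ^ 2))]
  have hlamQ : lam * (w * (a ^ 2 - b ^ 2) + 2 * a * b) ≤ |lam| * (s * (a ^ 2 + b ^ 2)) :=
    (le_abs_self _).trans <| by
      rw [abs_mul]; exact mul_le_mul_of_nonneg_left hQ (abs_nonneg _)
  nlinarith [sq_abs lam]

lemma half_le_abs_sqrt_sub_abs {w E ε lam : ℝ} (h₁ : ε ≤ |√(w ^ 2 + 1) - E|)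
    (h₂ : ε ≤ |√(w ^ 2 + 1) + E|) (hlam : |lam - E| ≤ ε / 2) :
    ε / 2 ≤ |(√(w ^ 2 + 1) - |lam|)| := by
  rcases abs_cases lam with ⟨hl, _⟩ | ⟨hl, _⟩ <;> rw [hl]
  · have := abs_sub_le (√(w ^ 2 + 1)) lam E
    linarith
  · have := abs_add_le (√(w ^ 2 + 1) + lam) (E - lam)
    rw [abs_sub_comm] at hlam
    simp only [add_add_sub_cancel, sub_neg_eq_add] at this ⊢
    linarith

lemma mul_norm_le_norm_siteBlock_sub_smul_mul {w lam δ : ℝ} (hδ₀ : 0 < δ)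
    (hδ : δ ≤ |(√(w ^ 2 + 1) - |lam|)|) (M : Matrix (Fin 2) (Fin 2) ℝ) :
    δ * ‖M‖ ≤ ‖(siteBlock w - lam • 1) * M‖ := by
  set T := toEuclideanCLM (n := Fin 2) (𝕜 := ℝ)
  have hvec : ∀ v, δ * ‖v‖ ≤ ‖T (siteBlock w - lam • 1) v‖ := by
    intro v
    refine abs_le_of_sq_le_sq' ?_ (norm_nonneg _) |>.2
    have hδ2 : δ ^ 2 ≤ (√(w ^ 2 + 1) - |lam|) ^ 2 := by
      rw [← sq_abs (_ - _)]; gcongr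
    have := sq_sqrt_sub_abs_mul_le w lam (v 0) (v 1)
    simp only [T, EuclideanSpace.real_norm_sq_eq, mul_pow, ofLp_toEuclideanCLM, siteBlock, mulVec,
      dotProduct, Fin.sum_univ_two, Matrix.sub_apply, of_apply,
      cons_val', cons_val_fin_one, cons_val_zero, cons_val_one, Matrix.smul_apply, smul_eq_mul,
      one_apply_eq, one_apply_ne zero_ne_one, one_apply_ne one_ne_zero]
    nlinarith [sq_nonneg (v 0), sq_nonneg (v 1)]
  rw [← le_div_iff₀' hδ₀, cstar_norm_def]
  refine ContinuousLinearMap.opNorm_le_bound _ (by positivity) fun v => ?_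
  rw [div_mul_eq_mul_div, le_div_iff₀' hδ₀]
  calc δ * ‖T M v‖ ≤ ‖T (siteBlock w - lam • 1) (T M v)‖ := hvec _
    _ = ‖T ((siteBlock w - lam • 1) * M) v‖ := by rw [map_mul]; rfl
    _ ≤ ‖(siteBlock w - lam • 1) * M‖ * ‖v‖ := (T _).le_opNorm v

section Blocks
variable {α β χ : Type*}

lemma blk_mul [Fintype β] (M : Matrix (α × Fin 2) (β × Fin 2) ℝ)
    (N : Matrix (β × Fin 2) (χ × Fin 2) ℝ) (x : α) (z : χ) :
    blk (M * N) x z = ∑ y, blk M x y * blk N y z := by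
  ext i j
  simp only [blk, mul_apply, Matrix.sum_apply, Fintype.sum_prod_type]

lemma blk_sub (M N : Matrix (α × Fin 2) (β × Fin 2) ℝ) (x : α) (y : β) :
    blk (M - N) x y = blk M x y - blk N x y := rfl

lemma blk_smul_one [DecidableEq α] (c : ℝ) (x y : α) :
    blk (c • 1 : Matrix (α × Fin 2) (α × Fin 2) ℝ) x y = if x = y then c • 1 else 0 := by
  ext i j
  by_cases h : x = y <;> simp [blk, one_apply, h]

end Blocks

section Lattice
variable {d : ℕ}

lemma dist1_self (x : Fin d → ℤ) : dist1 x x = 0 := by simp [dist1]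

lemma dist1_triangle_s11 (x y z : Fin d → ℤ) : dist1 x z ≤ dist1 x y + dist1 y z := by
  unfold dist1
  rw [← Finset.sum_add_distrib]
  exact Finset.sum_le_sum fun i _ => by omega

lemma exists_eq_one_of_sum_eq_one {ι : Type*} [Fintype ι] [DecidableEq ι] {f : ι → ℕ}
    (h : ∑ i, f i = 1) : ∃ i, f i = 1 ∧ ∀ j ≠ i, f j = 0 := by
  obtain ⟨i, -, hi⟩ := Finset.exists_ne_zero_of_sum_ne_zero (h.symm ▸ one_ne_zero)
  rw [← Finset.add_sum_erase _ _ (Finset.mem_univ i)] at h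
  refine ⟨i, by omega, fun j hj => ?_⟩
  exact Finset.sum_eq_zero_iff.1 (by omega) j (Finset.mem_erase.2 ⟨hj, Finset.mem_univ j⟩)

lemma card_filter_dist1_eq_one_le (s : Finset (Fin d → ℤ)) (x : Fin d → ℤ) :
    (Finset.univ.filter fun z : {z // z ∈ s} => dist1 x z = 1).card ≤ 2 * d := by
  classical
  calc _ ≤ ((Finset.univ : Finset (Fin d × Bool)).image
        fun p => Function.update x p.1 (x p.1 + if p.2 then 1 else -1)).card := by
        refine Finset.card_le_card_of_injOn Subtype.val (fun z hz => ?_)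
          Subtype.val_injective.injOn
        obtain ⟨i, hi, hne⟩ := exists_eq_one_of_sum_eq_one (Finset.mem_filter.1 hz).2
        refine Finset.mem_image.2 ⟨(i, z.1 i = x i + 1), Finset.mem_univ _, funext fun j => ?_⟩
        rcases eq_or_ne j i with rfl | hj
        · simp only [Function.update_self, decide_eq_true_eq]
          split_ifs <;> omega
        · have := hne j hj
          simp only [Function.update_of_ne hj]
          omega
    _ ≤ Fintype.card (Fin d × Bool) := Finset.card_image_le
    _ = 2 * d := by simp [mul_comm]

variable {γ : ℝ} {Λ Λ' : Finset (Fin d → ℤ)} {hsub : Λ' ⊆ Λ} {u : {x // x ∈ Λ} → ℝ}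

lemma blk_Ham (x y : {x // x ∈ Λ}) :
    blk (Ham d γ Λ u) x y =
      if x = y then siteBlock (u x) else if dist1 x.1 y.1 = 1 then γ • 1 else 0 := by
  ext i j
  by_cases h : x = y
  · subst h; fin_cases i <;> fin_cases j <;> simp [blk, Ham, siteBlock]
  · by_cases h' : dist1 x.1 y.1 = 1 <;> simp [blk, Ham, h, h', one_apply]

lemma blk_Dmat_sub_smul_one (lam : ℝ) (x x' : {x // x ∈ Λ'}) :
    blk (Dmat d γ Λ Λ' hsub u - lam • 1) x x' =
      (if x = x' then siteBlock (u ⟨x, hsub x.2⟩) - lam • 1 else 0) +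
        if dist1 x.1 x'.1 = 1 then γ • 1 else 0 := by
  rw [blk_sub, blk_smul_one, show blk (Dmat d γ Λ Λ' hsub u) x x' =
    blk (Ham d γ Λ u) ⟨x, hsub x.2⟩ ⟨x', hsub x'.2⟩ from rfl, blk_Ham]
  by_cases h : x = x'
  · subst h; simp [dist1_self]
  · have h' : (⟨x, hsub x.2⟩ : {x // x ∈ Λ}) ≠ ⟨x', hsub x'.2⟩ := fun e =>
      h (Subtype.ext (Subtype.mk.inj e))
    rw [if_neg h', if_neg h, if_neg h, sub_zero, zero_add]

lemma blk_Cmat (x : {x // x ∈ Λ'}) (y : {x // x ∈ Λ \ Λ'}) :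
    blk (Cmat d γ Λ Λ' hsub u) x y = if dist1 x.1 y.1 = 1 then γ • 1 else 0 := by
  rw [show blk (Cmat d γ Λ Λ' hsub u) x y =
    blk (Ham d γ Λ u) ⟨x, hsub x.2⟩ ⟨y, (Finset.mem_sdiff.1 y.2).1⟩ from rfl, blk_Ham, if_neg]
  intro e
  exact (Finset.mem_sdiff.1 y.2).2 (congrArg Subtype.val e ▸ x.2)

lemma siteBlock_sub_smul_mul_blk_add_eq {lam : ℝ}
    {X : Matrix ({x // x ∈ Λ'} × Fin 2) ({x // x ∈ Λ \ Λ'} × Fin 2) ℝ}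
    (hX : (Dmat d γ Λ Λ' hsub u - lam • 1) * X = Cmat d γ Λ Λ' hsub u)
    (x : {x // x ∈ Λ'}) (y : {x // x ∈ Λ \ Λ'}) :
    (siteBlock (u ⟨x, hsub x.2⟩) - lam • 1) * blk X x y +
        γ • ∑ x' ∈ Finset.univ.filter (fun x' : {x // x ∈ Λ'} => dist1 x.1 x'.1 = 1), blk X x' y =
      blk (Cmat d γ Λ Λ' hsub u) x y := by
  rw [← hX, blk_mul]
  simp only [blk_Dmat_sub_smul_one, add_mul, Finset.sum_add_distrib, ite_mul, zero_mul,
    Finset.sum_ite_eq, Finset.mem_univ, if_true, Finset.sum_filter, Finset.smul_sum, smul_mul,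
    one_mul, smul_ite, smul_zero]

lemma norm_blk_le_of_mul_eq {E ε lam : ℝ} (hγ : 0 ≤ γ) (hε : 0 < ε)
    {X : Matrix ({x // x ∈ Λ'} × Fin 2) ({x // x ∈ Λ \ Λ'} × Fin 2) ℝ}
    (hX : (Dmat d γ Λ Λ' hsub u - lam • 1) * X = Cmat d γ Λ Λ' hsub u)
    (x : {x // x ∈ Λ'}) (y : {x // x ∈ Λ \ Λ'})
    (hx : ε ≤ |√(u ⟨x, hsub x.2⟩ ^ 2 + 1) - E| ∧ ε ≤ |√(u ⟨x, hsub x.2⟩ ^ 2 + 1) + E|)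
    (hlam : |lam - E| ≤ ε / 2) :
    ‖blk X x y‖ ≤ (if dist1 x.1 y.1 = 1 then 2 * γ / ε else 0) +
      2 * γ / ε * ∑ x' ∈ Finset.univ.filter (fun x' : {x // x ∈ Λ'} => dist1 x.1 x'.1 = 1),
        ‖blk X x' y‖ := by
  set N := Finset.univ.filter (fun x' : {x // x ∈ Λ'} => dist1 x.1 x'.1 = 1)
  have hC : ‖blk (Cmat d γ Λ Λ' hsub u) x y‖ ≤ if dist1 x.1 y.1 = 1 then γ else 0 := by
    rw [blk_Cmat]
    split_ifs
    · rw [norm_smul, norm_one, mul_one, Real.norm_of_nonneg hγ]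
    · rw [norm_zero]
  have key : ε / 2 * ‖blk X x y‖ ≤
      (if dist1 x.1 y.1 = 1 then γ else 0) + γ * ∑ x' ∈ N, ‖blk X x' y‖ :=
    calc ε / 2 * ‖blk X x y‖ ≤ ‖(siteBlock (u ⟨x, hsub x.2⟩) - lam • 1) * blk X x y‖ :=
          mul_norm_le_norm_siteBlock_sub_smul_mul (by positivity)
            (half_le_abs_sqrt_sub_abs hx.1 hx.2 hlam) _
      _ = ‖blk (Cmat d γ Λ Λ' hsub u) x y - γ • ∑ x' ∈ N, blk X x' y‖ := by
          rw [← siteBlock_sub_smul_mul_blk_add_eq hX, add_sub_cancel_right]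
      _ ≤ ‖blk (Cmat d γ Λ Λ' hsub u) x y‖ + γ * ∑ x' ∈ N, ‖blk X x' y‖ := by
          refine (norm_sub_le _ _).trans (add_le_add le_rfl ?_)
          rw [norm_smul, Real.norm_of_nonneg hγ]
          exact mul_le_mul_of_nonneg_left (norm_sum_le _ _) hγ
      _ ≤ _ := by gcongr
  calc ‖blk X x y‖ = 2 / ε * (ε / 2 * ‖blk X x y‖) := by field_simp
    _ ≤ 2 / ε * ((if dist1 x.1 y.1 = 1 then γ else 0) + γ * ∑ x' ∈ N, ‖blk X x' y‖) := by
        gcongr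
    _ = _ := by split_ifs <;> ring

end Lattice

/-- there is `c_d > 0` such that if `2·c_d·γ ≤ ε` and all positions of
`Λ' ⊆ Λ` are `ε`-nonresonant with `E`, then for `|λ-E| ≤ ε/2` the 2×2 blocks of the
eigenfunction-generating kernel `(D-λ·I)⁻¹C` between `x ∈ Λ'` and `y ∈ R = Λ ∖ Λ'` are
bounded by `(c_d·γ/ε)^{max(|x-y|,1)}`. -/
theorem kernel_block_decay (d : ℕ) (hd : 1 ≤ d) :
    ∃ c : ℝ, 0 < c ∧
      ∀ (γ E ε : ℝ), 0 < γ → 0 < ε → 2 * c * γ ≤ ε →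
      ∀ (Λ : Finset (Fin d → ℤ)), (∃ a b, Λ = Finset.Icc a b) →
      ∀ (u : {x // x ∈ Λ} → ℝ), (∀ x, u x ∈ Set.Icc (-1 : ℝ) 1) →
      ∀ (Λ' : Finset (Fin d → ℤ)) (hsub : Λ' ⊆ Λ),
      (∀ x : {x // x ∈ Λ'},
          ε ≤ |Real.sqrt (u ⟨x.1, hsub x.2⟩ ^ 2 + 1) - E| ∧
          ε ≤ |Real.sqrt (u ⟨x.1, hsub x.2⟩ ^ 2 + 1) + E|) →
      ∀ lam : ℝ, |lam - E| ≤ ε / 2 →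
      ∀ (x : {x // x ∈ Λ'}) (y : {x // x ∈ Λ \ Λ'}),
        opNorm (blk ((Dmat d γ Λ Λ' hsub u - lam • 1)⁻¹ * Cmat d γ Λ Λ' hsub u) x y) ≤
          (c * γ / ε) ^ max (dist1 (x : Fin d → ℤ) (y : Fin d → ℤ)) 1 := by
  refine ⟨8 * d, by positivity, ?_⟩
  intro γ E ε hγ hε hcε Λ _ u _ Λ' hsub hnr lam hlam x y
  rw [opNorm_eq_norm]
  by_cases hD : IsUnit (Dmat d γ Λ Λ' hsub u - lam • 1).det
  swap
  -- Mathlib's `⁻¹` is `0` on singular matrices, so only the invertible case has content.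
  · rw [nonsing_inv_apply_not_isUnit _ hD, Matrix.zero_mul]
    exact (norm_zero (E := Matrix (Fin 2) (Fin 2) ℝ)).trans_le (by positivity)
  have hd' : (1 : ℝ) ≤ d := by exact_mod_cast hd
  have hκρ : 2 * (2 * γ / ε) ≤ 8 * d * γ / ε := by
    rw [← mul_div_assoc]; exact div_le_div_of_nonneg_right (by nlinarith) hε.le
  have hX := mul_nonsing_inv_cancel_left _ (Cmat d γ Λ Λ' hsub u) hD
  have hdecay := le_pow_of_le_sum_neighbors
    (fun x => Finset.univ.filter fun x' : {x // x ∈ Λ'} => dist1 x.1 x'.1 = 1)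
    (fun x => dist1 x.1 y.1) (n := 2 * d) (κ := 2 * γ / ε) (ρ := 8 * d * γ / ε)
    (by positivity) (by positivity) (by rw [div_le_one hε]; linarith) hκρ
    (le_of_eq (by push_cast; ring))
    (fun x => card_filter_dist1_eq_one_le Λ' x.1)
    (fun x x' hx' => by
      have := dist1_triangle_s11 x.1 x'.1 y.1
      rw [(Finset.mem_filter.1 hx').2] at this
      omega)
    (fun _ => norm_nonneg _)
    (fun x => norm_blk_le_of_mul_eq hγ.le hε hX x y (hnr x) hlam) x
  simpa only [mul_div_assoc] using hdecay
end
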